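/- arXiv:2506.17814 — 11 statements merged into one kernel-verified Lean document; each statement's English description precedes it below -/
import Mathlib

section
/- Let C ⊆ ℝⁿ be a nonempty closed convex set and let F : ℝⁿ → ℝⁿ be continuous, monotone, and paramonotone on C, with SOL(F,C) nonempty and the coerciveness condition holding. Let β : ℕ → ℝ be stepsizes with β_k > 0 for all k, ∑_{k=0}^∞ β_k = ∞ and ∑_{k=0}^∞ β_k² < ∞. Let (K_k)_{k∈ℕ} be nonempty closed convex subsets of ℝⁿ with C ⊆ K_k for every k, such that for every bounded set V ⊆ ℝⁿ there exists μ ∈ [0,1) with dist(P_{K_k}(x), C) ≤ μ·dist(x, C) for every k and every x ∈ V. Given x⁰ ∈ ℝⁿ, define inductively x^{k+1} = P_{K_k}(x^k − (β_k/η_k)F(x^k)), where η_k = max{1, ‖F(x^k)‖}. Then the sequence {x^k} is bounded and every cluster point of {x^k} belongs to SOL(F,C). -/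
/-
Each step is a projected gradient step onto `K k ⊇ C`, so for every `u ∈ C` the squared distance
`‖x k - u‖²` drops by `2 λ_k ⟪F (x k), x k - u⟫` up to an error `β k ²`, where `λ_k = β k / η_k`.
Coerciveness makes that inner product nonnegative outside a bounded set, which bounds the iterates.
On a bounded set the projections contract `dist (·, C)` uniformly, so `dist (x k, C)` is square
summable. For a solution `xs`, monotonicity gives `⟪F (x k), x k - xs⟫ ≥ -‖F xs‖ dist (x k, C)`, so
`‖x k - xs‖²` is quasi-Fejér: it converges and the gaps
`⟪F (x k), x k - xs⟫ + ‖F xs‖ dist (x k, C)` have summable `λ`-weighted sum. As `∑ λ_k = ∞`, the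
gaps tend to `0` along a subsequence; a cluster point `p` of it lies in `C` with
`⟪F p, p - xs⟫ = 0`, and paramonotonicity puts `p` in `SOL F C`. The quasi-Fejér property at `p`
then forces the whole sequence to converge to `p`.
-/

open scoped RealInnerProductSpace
open Metric Filter

/-- The solution set of the variational inequality problem VIP(F, C). -/
def SOL {n : ℕ} (F : EuclideanSpace ℝ (Fin n) → EuclideanSpace ℝ (Fin n))
    (C : Set (EuclideanSpace ℝ (Fin n))) : Set (EuclideanSpace ℝ (Fin n)) :=
  {x | x ∈ C ∧ ∀ y ∈ C, 0 ≤ ⟪F x, y - x⟫}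

open Bornology Finset Topology

section RealSequences

theorem le_sqrt_tsum_sq {β : ℕ → ℝ} (hβ : Summable fun k => β k ^ 2) (k : ℕ) :
    β k ≤ √(∑' j, β j ^ 2) :=
  (le_abs_self _).trans (Real.abs_le_sqrt (hβ.le_tsum k fun _ _ => sq_nonneg _))

theorem summable_of_le_mul_add {a e : ℕ → ℝ} {c : ℝ} (ha : ∀ k, 0 ≤ a k) (hc : c < 1)
    (he0 : ∀ k, 0 ≤ e k) (he : Summable e) (h : ∀ k, a (k + 1) ≤ c * a k + e k) :
    Summable a := by
  refine summable_of_sum_range_le ha (c := (a 0 + ∑' k, e k) / (1 - c)) fun N => ?_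
  have hshift : ∑ k ∈ range N, a (k + 1) ≤ c * ∑ k ∈ range N, a k + ∑' k, e k :=
    calc ∑ k ∈ range N, a (k + 1) ≤ ∑ k ∈ range N, (c * a k + e k) := sum_le_sum fun k _ => h k
      _ = c * ∑ k ∈ range N, a k + ∑ k ∈ range N, e k := by rw [sum_add_distrib, mul_sum]
      _ ≤ c * ∑ k ∈ range N, a k + ∑' k, e k := by
        gcongr; exact he.sum_le_tsum _ fun k _ => he0 k
  have hsucc : ∑ k ∈ range N, a k ≤ a 0 + ∑ k ∈ range N, a (k + 1) := by
    rw [add_comm, ← sum_range_succ' a N, sum_range_succ]; linarith [ha N]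
  rw [le_div_iff₀ (by linarith)]
  linarith

theorem summable_sq_of_le_mul_add {d b : ℕ → ℝ} {μ : ℝ} (hd : ∀ k, 0 ≤ d k) (hμ0 : 0 ≤ μ)
    (hμ1 : μ < 1) (hb : Summable fun k => b k ^ 2) (h : ∀ k, d (k + 1) ≤ μ * (d k + b k)) :
    Summable fun k => d k ^ 2 := by
  have h1μ : 0 < 1 - μ := by linarith
  refine summable_of_le_mul_add (fun k => sq_nonneg _) hμ1
    (fun k => by positivity) (hb.mul_left (μ ^ 2 / (1 - μ))) fun k => ?_
  have hsq : d (k + 1) ^ 2 ≤ μ ^ 2 * (d k + b k) ^ 2 := by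
    rw [← mul_pow]; exact pow_le_pow_left₀ (hd _) (h k) 2
  -- the two sides differ by `μ ((1 - μ) d - μ b)²`
  have hyoung : μ ^ 2 * (d k + b k) ^ 2 * (1 - μ) ≤ (μ * d k ^ 2) * (1 - μ) + μ ^ 2 * b k ^ 2 := by
    nlinarith [mul_nonneg hμ0 (sq_nonneg ((1 - μ) * d k - μ * b k))]
  calc d (k + 1) ^ 2 ≤ μ ^ 2 * (d k + b k) ^ 2 := hsq
    _ ≤ μ * d k ^ 2 + μ ^ 2 / (1 - μ) * b k ^ 2 := by
      rw [div_mul_eq_mul_div, ← sub_le_iff_le_add', le_div_iff₀ h1μ]; linarith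

theorem exists_tendsto_and_summable_of_le_sub_add {a g c : ℕ → ℝ} (ha : ∀ k, 0 ≤ a k)
    (hg : ∀ k, 0 ≤ g k) (hc0 : ∀ k, 0 ≤ c k) (hc : Summable c)
    (h : ∀ k, a (k + 1) ≤ a k - g k + c k) :
    (∃ L, Tendsto a atTop (𝓝 L)) ∧ Summable g := by
  have hpartial : ∀ N, ∑ k ∈ range N, c k ≤ ∑' k, c k := fun N =>
    hc.sum_le_tsum _ fun k _ => hc0 k
  constructor
  · set b : ℕ → ℝ := fun k => a k - ∑ j ∈ range k, c j
    have hb : Antitone b := antitone_nat_of_succ_le fun k => by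
      simp only [b, sum_range_succ]; linarith [h k, hg k]
    have hbdd : BddBelow (Set.range b) :=
      ⟨-∑' k, c k, Set.forall_mem_range.2 fun k => by simp only [b]; linarith [ha k, hpartial k]⟩
    refine ⟨(⨅ k, b k) + ∑' k, c k, ?_⟩
    convert (tendsto_atTop_ciInf hb hbdd).add hc.hasSum.tendsto_sum_nat using 1
    ext k; simp only [b]; ring
  · refine summable_of_sum_range_le hg (c := a 0 + ∑' k, c k) fun N => ?_
    have htel : ∑ k ∈ range N, g k ≤ ∑ k ∈ range N, (a k - a (k + 1) + c k) :=
      sum_le_sum fun k _ => by linarith [h k]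
    rw [sum_add_distrib, sum_range_sub'] at htel
    linarith [ha N, hpartial N]

theorem exists_strictMono_tendsto_zero_of_summable_mul {w s : ℕ → ℝ} (hw0 : ∀ k, 0 ≤ w k)
    (hw : ¬Summable w) (hs0 : ∀ k, 0 ≤ s k) (hws : Summable fun k => w k * s k) :
    ∃ φ : ℕ → ℕ, StrictMono φ ∧ Tendsto (s ∘ φ) atTop (𝓝 0) := by
  refine MapClusterPt.tendsto_subseq (nhds_basis_ball.mapClusterPt_iff_frequently.2 fun ε hε => ?_)
  by_contra hsmall
  refine hw (Summable.of_norm_bounded_eventually_nat (hws.div_const ε) ?_)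
  filter_upwards [not_frequently.1 hsmall] with k hk
  rw [mem_ball, Real.dist_eq, sub_zero, abs_of_nonneg (hs0 k), not_lt] at hk
  rw [Real.norm_of_nonneg (hw0 k), le_div_iff₀ hε]
  exact mul_le_mul_of_nonneg_left hk (hw0 k)

theorem div_max_one_le {b : ℝ} (hb : 0 ≤ b) (r : ℝ) : b / max 1 r ≤ b :=
  div_le_self hb (le_max_left _ _)

theorem div_max_one_mul_le {b : ℝ} (hb : 0 ≤ b) (r : ℝ) : b / max 1 r * r ≤ b := by
  have hpos : 0 < max 1 r := lt_max_of_lt_left one_pos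
  calc b / max 1 r * r ≤ b / max 1 r * max 1 r := by gcongr; exact le_max_right _ _
    _ = b := div_mul_cancel₀ b hpos.ne'

end RealSequences

theorem tendsto_of_tendsto_dist_of_subseq {X : Type*} [PseudoMetricSpace X] {x : ℕ → X} {p : X}
    {L : ℝ} (hL : Tendsto (fun k => dist (x k) p) atTop (𝓝 L)) {φ : ℕ → ℕ} (hφ : StrictMono φ)
    (hxφ : Tendsto (x ∘ φ) atTop (𝓝 p)) : Tendsto x atTop (𝓝 p) := by
  have hL0 : L = 0 :=
    tendsto_nhds_unique (hL.comp hφ.tendsto_atTop) (tendsto_iff_dist_tendsto_zero.1 hxφ)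
  exact tendsto_iff_dist_tendsto_zero.2 (hL0 ▸ hL)

section InnerProductSpace

variable {E : Type*} [NormedAddCommGroup E] [InnerProductSpace ℝ E]

section NearestPoint

variable {K : Set E} {x q u : E}

theorem real_inner_sub_le_zero_of_forall_norm_le (hK : Convex ℝ K) (hq : q ∈ K)
    (hmin : ∀ y ∈ K, ‖x - q‖ ≤ ‖x - y‖) (hu : u ∈ K) : ⟪x - q, u - q⟫ ≤ 0 := by
  have : Nonempty K := ⟨⟨q, hq⟩⟩
  have hbdd : BddBelow (Set.range fun w : K => ‖x - w‖) :=
    ⟨0, Set.forall_mem_range.2 fun _ => norm_nonneg _⟩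
  exact (norm_eq_iInf_iff_real_inner_le_zero hK hq).1
    (le_antisymm (le_ciInf fun w => hmin w w.2) (ciInf_le hbdd ⟨q, hq⟩)) u hu

theorem norm_sub_le_of_forall_norm_le (hK : Convex ℝ K) (hq : q ∈ K)
    (hmin : ∀ y ∈ K, ‖x - q‖ ≤ ‖x - y‖) (hu : u ∈ K) : ‖q - u‖ ≤ ‖x - u‖ := by
  have hobtuse := real_inner_sub_le_zero_of_forall_norm_le hK hq hmin hu
  have hexpand : ‖x - u‖ ^ 2 = ‖x - q‖ ^ 2 - 2 * ⟪x - q, u - q⟫ + ‖q - u‖ ^ 2 := by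
    rw [show x - u = (x - q) + (q - u) by abel, norm_add_sq_real,
      show q - u = -(u - q) by abel, inner_neg_right, norm_neg]
    ring
  rw [← sq_le_sq₀ (norm_nonneg _) (norm_nonneg _), hexpand]
  nlinarith [sq_nonneg ‖x - q‖]

theorem sq_norm_sub_le_of_forall_norm_le_sub_smul (hK : Convex ℝ K) {v : E} {t b : ℝ}
    (ht : 0 ≤ t) (htv : t * ‖v‖ ≤ b) (hq : q ∈ K)
    (hmin : ∀ y ∈ K, ‖x - t • v - q‖ ≤ ‖x - t • v - y‖) (hu : u ∈ K) :
    ‖q - u‖ ^ 2 ≤ ‖x - u‖ ^ 2 - 2 * t * ⟪v, x - u⟫ + b ^ 2 := by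
  have hnonexp := norm_sub_le_of_forall_norm_le hK hq hmin hu
  have hexpand : ‖x - t • v - u‖ ^ 2 = ‖x - u‖ ^ 2 - 2 * t * ⟪v, x - u⟫ + (t * ‖v‖) ^ 2 := by
    rw [show x - t • v - u = (x - u) - t • v by abel, norm_sub_sq_real, real_inner_smul_right,
      norm_smul, Real.norm_of_nonneg ht, real_inner_comm]
    ring
  have hb : (t * ‖v‖) ^ 2 ≤ b ^ 2 := pow_le_pow_left₀ (by positivity) htv 2
  nlinarith [pow_le_pow_left₀ (norm_nonneg _) hnonexp 2]

end NearestPoint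

theorem isBounded_range_of_coercive {F : E → E} {z : E} {W : Set E} (hW : IsBounded W)
    (hcoer : ∀ y ∉ W, 0 ≤ ⟪F y, y - z⟫) {x : ℕ → E} {t β : ℕ → ℝ} (ht : ∀ k, 0 ≤ t k)
    (htF : ∀ k, t k * ‖F (x k)‖ ≤ β k) (hβ : Summable fun k => β k ^ 2)
    (hstep : ∀ k, ‖x (k + 1) - z‖ ^ 2 ≤ ‖x k - z‖ ^ 2 - 2 * t k * ⟪F (x k), x k - z⟫ + β k ^ 2) :
    IsBounded (Set.range x) := by
  obtain ⟨ρ, hρ⟩ := hW.subset_closedBall z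
  set S := ∑' k, β k ^ 2
  set A := max (‖x 0 - z‖ ^ 2) ((ρ + √S) ^ 2)
  have hβ0 : ∀ k, 0 ≤ β k := fun k => (mul_nonneg (ht k) (norm_nonneg _)).trans (htF k)
  have hgrowth : ∀ k, ‖x (k + 1) - z‖ ≤ ‖x k - z‖ + β k := fun k => by
    have hinner : -⟪F (x k), x k - z⟫ ≤ ‖F (x k)‖ * ‖x k - z‖ :=
      neg_le.1 (neg_le_of_abs_le (abs_real_inner_le_norm _ _))
    rw [← sq_le_sq₀ (norm_nonneg _) (by linarith [hβ0 k, norm_nonneg (x k - z)])]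
    nlinarith [hstep k, mul_le_mul_of_nonneg_right (htF k) (norm_nonneg (x k - z)),
      mul_le_mul_of_nonneg_left hinner (ht k)]
  -- inside `W` the iterates stay in a fixed ball; outside `W` coercivity makes the step
  -- increase the squared distance to `z` by at most `β k ^ 2`
  have hbound : ∀ k, ‖x k - z‖ ^ 2 ≤ A + ∑ j ∈ range k, β j ^ 2 := by
    intro k
    induction k with
    | zero => simp [A]
    | succ k ih =>
      rw [sum_range_succ]
      by_cases hk : x k ∈ W
      · have hxk : ‖x k - z‖ ≤ ρ := by simpa [dist_eq_norm] using hρ hk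
        have hnear : ‖x (k + 1) - z‖ ^ 2 ≤ (ρ + √S) ^ 2 := pow_le_pow_left₀ (norm_nonneg _)
          ((hgrowth k).trans (add_le_add hxk (le_sqrt_tsum_sq hβ k))) 2
        have : 0 ≤ ∑ j ∈ range k, β j ^ 2 := sum_nonneg fun j _ => sq_nonneg _
        linarith [le_max_right (‖x 0 - z‖ ^ 2) ((ρ + √S) ^ 2), sq_nonneg (β k)]
      · nlinarith [hstep k, mul_nonneg (ht k) (hcoer _ hk)]
  refine (isBounded_closedBall (x := z) (r := √(A + S))).subset (Set.range_subset_iff.2 fun k => ?_)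
  rw [mem_closedBall, dist_eq_norm, Real.le_sqrt (norm_nonneg _) (by positivity)]
  exact (hbound k).trans (by linarith [hβ.sum_le_tsum (range k) fun j _ => sq_nonneg (β j)])

theorem summable_sq_infDist_of_contraction {C : Set E} {P : ℕ → E → E}
    (hcontr : ∀ V : Set E, IsBounded V →
      ∃ μ : ℝ, 0 ≤ μ ∧ μ < 1 ∧ ∀ k, ∀ y ∈ V, infDist (P k y) C ≤ μ * infDist y C)
    {F : E → E} {x : ℕ → E} {t β : ℕ → ℝ} (hx : ∀ k, x (k + 1) = P k (x k - t k • F (x k)))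
    (hxb : IsBounded (Set.range x)) (ht : ∀ k, 0 ≤ t k) (htF : ∀ k, t k * ‖F (x k)‖ ≤ β k)
    (hβ : Summable fun k => β k ^ 2) :
    Summable fun k => infDist (x k) C ^ 2 := by
  have hy : ∀ k, dist (x k - t k • F (x k)) (x k) ≤ β k := fun k => by
    rw [dist_eq_norm, sub_sub_cancel_left, norm_neg, norm_smul, Real.norm_of_nonneg (ht k)]
    exact htF k
  obtain ⟨R, hR⟩ := hxb.subset_closedBall 0
  have hV : IsBounded (Set.range fun k => x k - t k • F (x k)) :=
    (isBounded_closedBall (x := (0 : E)) (r := √(∑' k, β k ^ 2) + R)).subset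
      (Set.range_subset_iff.2 fun k => (dist_triangle _ (x k) 0).trans <|
        add_le_add ((hy k).trans (le_sqrt_tsum_sq hβ k)) (hR (Set.mem_range_self k)))
  obtain ⟨μ, hμ0, hμ1, hμ⟩ := hcontr _ hV
  refine summable_sq_of_le_mul_add (fun k => infDist_nonneg) hμ0 hμ1 hβ fun k => ?_
  rw [hx k]
  refine (hμ k _ (Set.mem_range_self k)).trans (mul_le_mul_of_nonneg_left ?_ hμ0)
  exact infDist_le_infDist_add_dist.trans (add_le_add le_rfl (hy k))

end InnerProductSpace

theorem not_summable_div_max_one_norm {E : Type*} [NormedAddCommGroup E] [ProperSpace E]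
    {F : E → E} (hF : Continuous F) {x : ℕ → E} (hx : IsBounded (Set.range x)) {β : ℕ → ℝ}
    (hβ0 : ∀ k, 0 ≤ β k) (hβ : ¬Summable β) :
    ¬Summable fun k => β k / max 1 ‖F (x k)‖ := by
  obtain ⟨M, hM⟩ := isBounded_iff_forall_norm_le.1 (hx.isCompact_closure.image hF).isBounded
  have hFx : ∀ k, ‖F (x k)‖ ≤ M := fun k =>
    hM _ ⟨x k, subset_closure (Set.mem_range_self k), rfl⟩
  refine fun hsum => hβ (.of_nonneg_of_le hβ0 (fun k => ?_) (hsum.mul_left (max 1 M)))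
  have hpos : 0 < max 1 ‖F (x k)‖ := lt_max_of_lt_left one_pos
  calc β k = max 1 ‖F (x k)‖ * (β k / max 1 ‖F (x k)‖) := (mul_div_cancel₀ _ hpos.ne').symm
    _ ≤ max 1 M * (β k / max 1 ‖F (x k)‖) :=
      mul_le_mul_of_nonneg_right (max_le_max le_rfl (hFx k)) (div_nonneg (hβ0 k) hpos.le)

section VariationalInequality

variable {n : ℕ} {C : Set (EuclideanSpace ℝ (Fin n))}
  {F : EuclideanSpace ℝ (Fin n) → EuclideanSpace ℝ (Fin n)}

theorem neg_mul_infDist_le_inner_of_mem_SOL (hC : IsClosed C)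
    (hmono : ∀ x y, 0 ≤ ⟪F x - F y, x - y⟫) {xs : EuclideanSpace ℝ (Fin n)} (hxs : xs ∈ SOL F C)
    (x : EuclideanSpace ℝ (Fin n)) : -(‖F xs‖ * infDist x C) ≤ ⟪F x, x - xs⟫ := by
  obtain ⟨z, hz, hdist⟩ := hC.exists_infDist_eq_dist ⟨xs, hxs.1⟩ x
  have hmono' : ⟪F xs, x - xs⟫ ≤ ⟪F x, x - xs⟫ := by
    have := hmono x xs; rw [inner_sub_left] at this; linarith
  have hsplit : ⟪F xs, x - xs⟫ = ⟪F xs, x - z⟫ + ⟪F xs, z - xs⟫ := by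
    rw [← inner_add_right, sub_add_sub_cancel]
  have hCS : -(‖F xs‖ * ‖x - z‖) ≤ ⟪F xs, x - z⟫ := neg_le_of_abs_le (abs_real_inner_le_norm _ _)
  rw [hdist, dist_eq_norm]
  linarith [hxs.2 z hz]

theorem mem_SOL_of_real_inner_le_zero (hmono : ∀ x y, 0 ≤ ⟪F x - F y, x - y⟫)
    (hpara : ∀ x ∈ C, ∀ y ∈ C, ⟪F x - F y, x - y⟫ = 0 → F x = F y)
    {xs p : EuclideanSpace ℝ (Fin n)} (hxs : xs ∈ SOL F C) (hp : p ∈ C)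
    (h : ⟪F p, p - xs⟫ ≤ 0) : p ∈ SOL F C := by
  have hzero : ⟪F p - F xs, p - xs⟫ = 0 := by
    have := hmono p xs; rw [inner_sub_left] at this ⊢; linarith [hxs.2 p hp]
  have hFp : F p = F xs := hpara p hp xs hxs.1 hzero
  refine ⟨hp, fun w hw => ?_⟩
  rw [hFp] at h ⊢
  rw [show w - p = (w - xs) - (p - xs) by abel, inner_sub_right]
  linarith [hxs.2 w hw]

theorem quasiFejer_of_mem_SOL (hC : IsClosed C) (hmono : ∀ x y, 0 ≤ ⟪F x - F y, x - y⟫)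
    {x : ℕ → EuclideanSpace ℝ (Fin n)} {t β : ℕ → ℝ} (ht0 : ∀ k, 0 ≤ t k) (htβ : ∀ k, t k ≤ β k)
    (hβ : Summable fun k => β k ^ 2) (hd : Summable fun k => infDist (x k) C ^ 2)
    (hstep : ∀ k, ∀ u ∈ C,
      ‖x (k + 1) - u‖ ^ 2 ≤ ‖x k - u‖ ^ 2 - 2 * t k * ⟪F (x k), x k - u⟫ + β k ^ 2)
    {xs : EuclideanSpace ℝ (Fin n)} (hxs : xs ∈ SOL F C) :
    (∃ L, Tendsto (fun k => dist (x k) xs) atTop (𝓝 L)) ∧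
      Summable fun k => t k * (⟪F (x k), x k - xs⟫ + ‖F xs‖ * infDist (x k) C) := by
  have hgap : ∀ k, 0 ≤ ⟪F (x k), x k - xs⟫ + ‖F xs‖ * infDist (x k) C := fun k => by
    linarith [neg_mul_infDist_le_inner_of_mem_SOL hC hmono hxs (x k)]
  -- the error term is summable because `2 t d ≤ 2 β d ≤ β² + d²`
  have hrec : ∀ k, ‖x (k + 1) - xs‖ ^ 2 ≤ ‖x k - xs‖ ^ 2
      - 2 * (t k * (⟪F (x k), x k - xs⟫ + ‖F xs‖ * infDist (x k) C))
      + (‖F xs‖ * (β k ^ 2 + infDist (x k) C ^ 2) + β k ^ 2) := fun k => by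
    have htd : 2 * t k * infDist (x k) C ≤ β k ^ 2 + infDist (x k) C ^ 2 := by
      nlinarith [sq_nonneg (β k - infDist (x k) C),
        mul_le_mul_of_nonneg_right (htβ k) (infDist_nonneg (x := x k) (s := C))]
    nlinarith [hstep k xs hxs.1, mul_le_mul_of_nonneg_left htd (norm_nonneg (F xs))]
  obtain ⟨⟨L, hL⟩, hsum⟩ := exists_tendsto_and_summable_of_le_sub_add
    (a := fun k => ‖x k - xs‖ ^ 2) (fun k => sq_nonneg _)
    (fun k => mul_nonneg zero_le_two (mul_nonneg (ht0 k) (hgap k)))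
    (fun k => by positivity) (((hβ.add hd).mul_left _).add hβ) hrec
  refine ⟨⟨√L, ?_⟩, (summable_mul_left_iff two_ne_zero).1 hsum⟩
  simpa [dist_eq_norm] using hL.sqrt

theorem exists_mem_SOL_tendsto_of_quasiFejer (hC : IsClosed C) (hF : Continuous F)
    (hmono : ∀ x y, 0 ≤ ⟪F x - F y, x - y⟫)
    (hpara : ∀ x ∈ C, ∀ y ∈ C, ⟪F x - F y, x - y⟫ = 0 → F x = F y) (hSOL : (SOL F C).Nonempty)
    {x : ℕ → EuclideanSpace ℝ (Fin n)} {t β : ℕ → ℝ} (ht0 : ∀ k, 0 ≤ t k) (htβ : ∀ k, t k ≤ β k)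
    (ht : ¬Summable t) (hβ : Summable fun k => β k ^ 2) (hxb : IsBounded (Set.range x))
    (hd : Summable fun k => infDist (x k) C ^ 2)
    (hstep : ∀ k, ∀ u ∈ C,
      ‖x (k + 1) - u‖ ^ 2 ≤ ‖x k - u‖ ^ 2 - 2 * t k * ⟪F (x k), x k - u⟫ + β k ^ 2) :
    ∃ p ∈ SOL F C, Tendsto x atTop (𝓝 p) := by
  obtain ⟨xs, hxs⟩ := hSOL
  have hfejer := fun z (hz : z ∈ SOL F C) => quasiFejer_of_mem_SOL hC hmono ht0 htβ hβ hd hstep hz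
  obtain ⟨φ, hφ, hgapφ⟩ := exists_strictMono_tendsto_zero_of_summable_mul ht0 ht
    (fun k => by linarith [neg_mul_infDist_le_inner_of_mem_SOL hC hmono hxs (x k)])
    (hfejer xs hxs).2
  obtain ⟨p, -, ψ, hψ, hxψ⟩ := tendsto_subseq_of_bounded hxb fun j => Set.mem_range_self (φ j)
  have hd0 : Tendsto (fun k => infDist (x k) C) atTop (𝓝 0) := by
    simpa [Real.sqrt_sq infDist_nonneg] using hd.tendsto_atTop_zero.sqrt
  have hdψ := hd0.comp (hφ.comp hψ).tendsto_atTop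
  have hpC : p ∈ C := by
    have := ((continuous_infDist_pt C).tendsto p).comp hxψ
    exact (hC.mem_iff_infDist_zero ⟨xs, hxs.1⟩).2 (tendsto_nhds_unique this hdψ)
  have hinner : ⟪F p, p - xs⟫ = 0 := by
    have hcont : Continuous fun q => ⟪F q, q - xs⟫ := hF.inner (continuous_id.sub continuous_const)
    have hlim := (hcont.tendsto p).comp hxψ
    refine tendsto_nhds_unique hlim ?_
    simpa [Function.comp_def] using (hgapφ.comp hψ.tendsto_atTop).sub (hdψ.const_mul ‖F xs‖)
  have hp := mem_SOL_of_real_inner_le_zero hmono hpara hxs hpC hinner.le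
  exact ⟨p, hp, tendsto_of_tendsto_dist_of_subseq (hfejer p hp).1.choose_spec (hφ.comp hψ) hxψ⟩

end VariationalInequality

theorem stmt_0_general {n : ℕ}
    (C : Set (EuclideanSpace ℝ (Fin n)))
    (hCcl : IsClosed C)
    (F : EuclideanSpace ℝ (Fin n) → EuclideanSpace ℝ (Fin n))
    (hFcont : Continuous F)
    (hFmono : ∀ x y, 0 ≤ ⟪F x - F y, x - y⟫)
    (hFpara : ∀ x ∈ C, ∀ y ∈ C, ⟪F x - F y, x - y⟫ = 0 → F x = F y)
    (hSOLne : (SOL F C).Nonempty)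
    (hcoer : ∃ zhat ∈ C, ∃ W : Set (EuclideanSpace ℝ (Fin n)),
      Bornology.IsBounded W ∧ ∀ x ∉ W, 0 ≤ ⟪F x, x - zhat⟫)
    (β : ℕ → ℝ) (hβpos : ∀ k, 0 < β k)
    (hβdiv : Tendsto (fun N => ∑ k ∈ Finset.range N, β k) atTop atTop)
    (hβsq : Summable fun k => (β k) ^ 2)
    (K : ℕ → Set (EuclideanSpace ℝ (Fin n)))
    (hKcv : ∀ k, Convex ℝ (K k)) (hCK : ∀ k, C ⊆ K k)
    -- `P k` is the metric projection onto `K k`: `P k x` is the point of `K k` nearest to `x`.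
    (P : ℕ → EuclideanSpace ℝ (Fin n) → EuclideanSpace ℝ (Fin n))
    (hP : ∀ k x, P k x ∈ K k ∧ ∀ y ∈ K k, ‖x - P k x‖ ≤ ‖x - y‖)
    (hcontr : ∀ V : Set (EuclideanSpace ℝ (Fin n)), Bornology.IsBounded V →
      ∃ μ : ℝ, 0 ≤ μ ∧ μ < 1 ∧ ∀ k, ∀ x ∈ V, infDist (P k x) C ≤ μ * infDist x C)
    (x : ℕ → EuclideanSpace ℝ (Fin n))
    (hx : ∀ k, x (k + 1) = P k (x k - (β k / max 1 ‖F (x k)‖) • F (x k))) :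
    Bornology.IsBounded (Set.range x) ∧
      ∀ p : EuclideanSpace ℝ (Fin n),
        (∃ φ : ℕ → ℕ, StrictMono φ ∧ Tendsto (x ∘ φ) atTop (nhds p)) → p ∈ SOL F C := by
  obtain ⟨zhat, hzhat, W, hW, hcoerW⟩ := hcoer
  set t : ℕ → ℝ := fun k => β k / max 1 ‖F (x k)‖
  have hβ0 : ∀ k, 0 ≤ β k := fun k => (hβpos k).le
  have ht0 : ∀ k, 0 ≤ t k := fun k => div_nonneg (hβ0 k) (zero_le_one.trans (le_max_left _ _))
  have htF : ∀ k, t k * ‖F (x k)‖ ≤ β k := fun k => div_max_one_mul_le (hβ0 k) _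
  have hstep : ∀ k, ∀ u ∈ C,
      ‖x (k + 1) - u‖ ^ 2 ≤ ‖x k - u‖ ^ 2 - 2 * t k * ⟪F (x k), x k - u⟫ + β k ^ 2 :=
    fun k u hu => hx k ▸ sq_norm_sub_le_of_forall_norm_le_sub_smul (hKcv k) (ht0 k) (htF k)
      (hP k _).1 (hP k _).2 (hCK k hu)
  have hbdd := isBounded_range_of_coercive hW hcoerW ht0 htF hβsq fun k => hstep k zhat hzhat
  have ht : ¬Summable t := not_summable_div_max_one_norm hFcont hbdd hβ0
    ((not_summable_iff_tendsto_nat_atTop_of_nonneg hβ0).2 hβdiv)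
  obtain ⟨p, hp, hxp⟩ := exists_mem_SOL_tendsto_of_quasiFejer hCcl hFcont hFmono hFpara hSOLne
    ht0 (fun k => div_max_one_le (hβ0 k) _) ht hβsq hbdd
    (summable_sq_infDist_of_contraction hcontr hx hbdd ht0 htF hβsq) hstep
  refine ⟨hbdd, fun q ⟨φ, hφ, hq⟩ => ?_⟩
  rwa [tendsto_nhds_unique hq (hxp.comp hφ.tendsto_atTop)]

theorem stmt_0 {n : ℕ} (hn : 0 < n)
    (C : Set (EuclideanSpace ℝ (Fin n)))
    (hCne : C.Nonempty) (hCcl : IsClosed C) (hCcv : Convex ℝ C)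
    (F : EuclideanSpace ℝ (Fin n) → EuclideanSpace ℝ (Fin n))
    (hFcont : Continuous F)
    (hFmono : ∀ x y, 0 ≤ ⟪F x - F y, x - y⟫)
    (hFpara : ∀ x ∈ C, ∀ y ∈ C, ⟪F x - F y, x - y⟫ = 0 → F x = F y)
    (hSOLne : (SOL F C).Nonempty)
    (hcoer : ∃ zhat ∈ C, ∃ W : Set (EuclideanSpace ℝ (Fin n)),
      Bornology.IsBounded W ∧ ∀ x ∉ W, 0 ≤ ⟪F x, x - zhat⟫)
    (β : ℕ → ℝ) (hβpos : ∀ k, 0 < β k)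
    (hβdiv : Tendsto (fun N => ∑ k ∈ Finset.range N, β k) atTop atTop)
    (hβsq : Summable fun k => (β k) ^ 2)
    (K : ℕ → Set (EuclideanSpace ℝ (Fin n)))
    (hKne : ∀ k, (K k).Nonempty) (hKcl : ∀ k, IsClosed (K k))
    (hKcv : ∀ k, Convex ℝ (K k)) (hCK : ∀ k, C ⊆ K k)
    -- `P k` is the metric projection onto `K k`: `P k x` is the point of `K k` nearest to `x`.
    (P : ℕ → EuclideanSpace ℝ (Fin n) → EuclideanSpace ℝ (Fin n))
    (hP : ∀ k x, P k x ∈ K k ∧ ∀ y ∈ K k, ‖x - P k x‖ ≤ ‖x - y‖)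
    (hcontr : ∀ V : Set (EuclideanSpace ℝ (Fin n)), Bornology.IsBounded V →
      ∃ μ : ℝ, 0 ≤ μ ∧ μ < 1 ∧ ∀ k, ∀ x ∈ V, infDist (P k x) C ≤ μ * infDist x C)
    (x : ℕ → EuclideanSpace ℝ (Fin n))
    (hx : ∀ k, x (k + 1) = P k (x k - (β k / max 1 ‖F (x k)‖) • F (x k))) :
    Bornology.IsBounded (Set.range x) ∧
      ∀ p : EuclideanSpace ℝ (Fin n),
        (∃ φ : ℕ → ℕ, StrictMono φ ∧ Tendsto (x ∘ φ) atTop (nhds p)) → p ∈ SOL F C :=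
  stmt_0_general C hCcl F hFcont hFmono hFpara hSOLne hcoer β hβpos hβdiv hβsq K hKcv hCK P hP
    hcontr x hx
end

section
/- Let C ⊆ ℝⁿ be a nonempty closed convex set and let F : ℝⁿ → ℝⁿ be continuous, monotone, and paramonotone on C, with the coerciveness condition holding. Let β : ℕ → ℝ be stepsizes with β_k > 0 for all k, ∑_{k=0}^∞ β_k = ∞ and ∑_{k=0}^∞ β_k² < ∞. Let (K_k)_{k∈ℕ} be nonempty closed convex subsets of ℝⁿ with C ⊆ K_k for every k, such that for every bounded set V ⊆ ℝⁿ there exists μ ∈ [0,1) with dist(P_{K_k}(x), C) ≤ μ·dist(x, C) for every k and every x ∈ V. Given x⁰ ∈ ℝⁿ, define inductively x^{k+1} = P_{K_k}(x^k − (β_k/η_k)F(x^k)), where η_k = max{1, ‖F(x^k)‖}. If SOL(F,C) = {x*} is a singleton, then the whole sequence {x^k} converges to x*. -/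
set_option maxHeartbeats 1000000

open scoped RealInnerProductSpace
open Metric Filter

private lemma tendsto_zero_of_contract {a c : ℕ → ℝ} {μ : ℝ} (hμ0 : 0 ≤ μ) (hμ1 : μ < 1)
    (ha : ∀ k, 0 ≤ a k) (hrec : ∀ k, a (k+1) ≤ μ * a k + c k)
    (hc0 : Tendsto c atTop (nhds 0)) : Tendsto a atTop (nhds 0) := by
  rw [Metric.tendsto_atTop]
  intro ε hε
  have hε2 : 0 < (1 - μ) * (ε/2) := by nlinarith
  obtain ⟨N₀, hN₀⟩ := (Metric.tendsto_atTop.1 hc0) ((1-μ)*(ε/2)) hε2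
  have hcle : ∀ k ≥ N₀, c k ≤ (1-μ)*(ε/2) := by
    intro k hk
    have := hN₀ k hk
    rw [Real.dist_eq, sub_zero] at this
    exact (le_abs_self _).trans this.le
  have claim : ∀ m, a (N₀ + m) ≤ μ^m * a N₀ + ε/2 := by
    intro m
    induction m with
    | zero => simp; nlinarith
    | succ m ih =>
      have h1 := hrec (N₀ + m)
      have h2 := hcle (N₀ + m) (Nat.le_add_right _ _)
      have : N₀ + (m+1) = (N₀ + m) + 1 := by ring
      rw [this]
      calc a ((N₀+m)+1) ≤ μ * a (N₀+m) + c (N₀+m) := h1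
        _ ≤ μ * (μ^m * a N₀ + ε/2) + (1-μ)*(ε/2) := by
            have := mul_le_mul_of_nonneg_left ih hμ0
            linarith
        _ = μ^(m+1) * a N₀ + ε/2 := by ring
  have hpow : Tendsto (fun m => μ^m * a N₀) atTop (nhds 0) := by
    have := tendsto_pow_atTop_nhds_zero_of_lt_one hμ0 hμ1
    simpa using this.mul_const (a N₀)
  obtain ⟨M, hM⟩ := (Metric.tendsto_atTop.1 hpow) (ε/2) (by linarith)
  refine ⟨N₀ + M, fun k hk => ?_⟩
  have hm : k = N₀ + (k - N₀) := by omega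
  have hM' := hM (k - N₀) (by omega)
  rw [Real.dist_eq, sub_zero] at hM' ⊢
  have h1 := claim (k - N₀)
  rw [← hm] at h1
  have h2 := lt_of_le_of_lt (le_abs_self _) hM'
  rw [abs_of_nonneg (ha k)]
  linarith

private lemma summable_of_contract {s e : ℕ → ℝ} {μ : ℝ} (hμ0 : 0 ≤ μ) (hμ1 : μ < 1)
    (hs : ∀ k, 0 ≤ s k) (he : ∀ k, 0 ≤ e k) (hrec : ∀ k, s (k+1) ≤ μ * s k + e k)
    (hesum : Summable e) : Summable s := by
  set E := ∑' k, e k with hE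
  have hE0 : 0 ≤ E := tsum_nonneg he
  apply summable_of_sum_range_le (c := (s 0 + E)/(1-μ)) hs
  intro N
  have key : ∑ i ∈ Finset.range N, s i - s 0 ≤ μ * ∑ i ∈ Finset.range N, s i + E := by
    have h1 : ∑ i ∈ Finset.range N, s (i+1) ≤ μ * ∑ i ∈ Finset.range N, s i + ∑ i ∈ Finset.range N, e i := by
      rw [Finset.mul_sum, ← Finset.sum_add_distrib]
      exact Finset.sum_le_sum fun i _ => hrec i
    have h2 : ∑ i ∈ Finset.range N, e i ≤ E := Summable.sum_le_tsum _ (fun i _ => he i) hesum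
    have h3 : ∑ i ∈ Finset.range N, s i - s 0 ≤ ∑ i ∈ Finset.range N, s (i+1) := by
      cases N with
      | zero => simp [hs 0]
      | succ N =>
        rw [Finset.sum_range_succ' s]
        have : ∑ i ∈ Finset.range N, s (i+1) ≤ ∑ i ∈ Finset.range (N+1), s (i+1) := by
          rw [Finset.sum_range_succ]
          linarith [hs (N+1)]
        linarith
    linarith
  have hT : 0 ≤ ∑ i ∈ Finset.range N, s i := Finset.sum_nonneg fun i _ => hs i
  rw [le_div_iff₀ (by linarith : (0:ℝ) < 1 - μ)]
  nlinarith

private lemma quasiFejer {r e : ℕ → ℝ} (hr : ∀ k, 0 ≤ r k) (he : ∀ k, 0 ≤ e k)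
    (hrec : ∀ k, r (k+1) ≤ r k + e k) (hesum : Summable e) :
    ∃ L, Tendsto r atTop (nhds L) := by
  set S : ℕ → ℝ := fun N => ∑ i ∈ Finset.range N, e i with hS
  set t : ℕ → ℝ := fun k => r k - S k with ht
  have hanti : Antitone t := by
    apply antitone_nat_of_succ_le
    intro k
    have := hrec k
    simp only [ht, hS, Finset.sum_range_succ]
    linarith
  have hbdd : BddBelow (Set.range t) := by
    refine ⟨-(∑' k, e k), ?_⟩
    rintro _ ⟨k, rfl⟩
    have h1 : S k ≤ ∑' k, e k := Summable.sum_le_tsum _ (fun i _ => he i) hesum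
    have := hr k
    simp only [ht]
    linarith
  have htt := tendsto_atTop_ciInf hanti hbdd
  have hSt : Tendsto S atTop (nhds (∑' k, e k)) := hesum.hasSum.tendsto_sum_nat
  refine ⟨(⨅ i, t i) + ∑' k, e k, ?_⟩
  have : r = fun k => t k + S k := by funext k; simp [ht]
  rw [this]
  exact htt.add hSt

private lemma young_exists {μ : ℝ} (hμ0 : 0 ≤ μ) (hμ1 : μ < 1) :
    ∃ ν C : ℝ, 0 ≤ ν ∧ ν < 1 ∧ 0 ≤ C ∧ ∀ d b : ℝ, (μ*d + b)^2 ≤ ν*d^2 + C*b^2 := by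
  have h1 : 0 < 1 - μ^2 := by nlinarith
  refine ⟨(1+μ^2)/2, 1 + 2/(1-μ^2), by positivity, by nlinarith, by positivity, ?_⟩
  intro d b
  have h2 : (1-μ^2) * (2/(1-μ^2)) = 2 := by field_simp
  nlinarith [sq_nonneg ((1-μ^2)*d - 2*μ*b), sq_nonneg b, sq_nonneg d, sq_nonneg (μ*d - b), sq_nonneg (μ*d + b), mul_pos h1 h1, mul_nonneg (mul_nonneg h1.le hμ0) (sq_nonneg b)]



open scoped RealInnerProductSpace
open Metric Filter

theorem stmt_1 {n : ℕ} (hn : 0 < n)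
    (C : Set (EuclideanSpace ℝ (Fin n)))
    (hCne : C.Nonempty) (hCcl : IsClosed C) (hCcv : Convex ℝ C)
    (F : EuclideanSpace ℝ (Fin n) → EuclideanSpace ℝ (Fin n))
    (hFcont : Continuous F)
    (hFmono : ∀ x y, 0 ≤ ⟪F x - F y, x - y⟫)
    (hFpara : ∀ x ∈ C, ∀ y ∈ C, ⟪F x - F y, x - y⟫ = 0 → F x = F y)
    (hcoer : ∃ zhat ∈ C, ∃ W : Set (EuclideanSpace ℝ (Fin n)),
      Bornology.IsBounded W ∧ ∀ x ∉ W, 0 ≤ ⟪F x, x - zhat⟫)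
    (β : ℕ → ℝ) (hβpos : ∀ k, 0 < β k)
    (hβdiv : Tendsto (fun N => ∑ k ∈ Finset.range N, β k) atTop atTop)
    (hβsq : Summable fun k => (β k) ^ 2)
    (K : ℕ → Set (EuclideanSpace ℝ (Fin n)))
    (hKne : ∀ k, (K k).Nonempty) (hKcl : ∀ k, IsClosed (K k))
    (hKcv : ∀ k, Convex ℝ (K k)) (hCK : ∀ k, C ⊆ K k)
    -- `P k` is the metric projection onto `K k`: `P k x` is the point of `K k` nearest to `x`.
    (P : ℕ → EuclideanSpace ℝ (Fin n) → EuclideanSpace ℝ (Fin n))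
    (hP : ∀ k x, P k x ∈ K k ∧ ∀ y ∈ K k, ‖x - P k x‖ ≤ ‖x - y‖)
    (hcontr : ∀ V : Set (EuclideanSpace ℝ (Fin n)), Bornology.IsBounded V →
      ∃ μ : ℝ, 0 ≤ μ ∧ μ < 1 ∧ ∀ k, ∀ x ∈ V, infDist (P k x) C ≤ μ * infDist x C)
    (x : ℕ → EuclideanSpace ℝ (Fin n))
    (hx : ∀ k, x (k + 1) = P k (x k - (β k / max 1 ‖F (x k)‖) • F (x k)))
    (xstar : EuclideanSpace ℝ (Fin n)) (hSOL : SOL F C = {xstar}) :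
    Tendsto x atTop (nhds xstar) := by
  classical
  have hxs : xstar ∈ SOL F C := by rw [hSOL]; exact rfl
  obtain ⟨hxsC, hxsSol⟩ := hxs
  obtain ⟨zhat, hzC, W, hWbdd, hW⟩ := hcoer
  set η : ℕ → ℝ := fun k => max 1 ‖F (x k)‖ with hηdef
  set y : ℕ → EuclideanSpace ℝ (Fin n) := fun k => x k - (β k / η k) • F (x k) with hydef
  have hη1 : ∀ k, 1 ≤ η k := fun k => le_max_left _ _
  have hη0 : ∀ k, 0 < η k := fun k => lt_of_lt_of_le one_pos (hη1 k)
  have hηF : ∀ k, ‖F (x k)‖ ≤ η k := fun k => le_max_right _ _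
  have hc0 : ∀ k, 0 ≤ β k / η k := fun k => div_nonneg (hβpos k).le (hη0 k).le
  have hxk : ∀ k, x (k+1) = P k (y k) := hx
  -- step size bound
  have hstepF : ∀ k, (β k / η k) * ‖F (x k)‖ ≤ β k := by
    intro k
    calc (β k / η k) * ‖F (x k)‖ ≤ (β k / η k) * η k :=
          mul_le_mul_of_nonneg_left (hηF k) (hc0 k)
      _ = β k := div_mul_cancel₀ _ (hη0 k).ne'
  have hstep : ∀ k, ‖y k - x k‖ ≤ β k := by
    intro k
    have h1 : y k - x k = -((β k / η k) • F (x k)) := by simp [hydef]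
    rw [h1, norm_neg, norm_smul, Real.norm_eq_abs, abs_of_nonneg (hc0 k)]
    exact hstepF k
  -- projection characterization
  have hPchar : ∀ k x₀, ∀ z ∈ K k, ⟪x₀ - P k x₀, z - P k x₀⟫ ≤ 0 := by
    intro k x₀ z hz
    set v := P k x₀ with hv
    have hvK : v ∈ K k := (hP k x₀).1
    have hkey : ∀ t : ℝ, 0 < t → t ≤ 1 → ⟪x₀ - v, z - v⟫ ≤ (t/2) * ‖z - v‖^2 := by
      intro t ht0 ht1
      have hwK : v + t • (z - v) ∈ K k := by
        have := (hKcv k) hvK hz (by linarith : (0:ℝ) ≤ 1 - t) ht0.le (by ring)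
        convert this using 1
        module
      have h1 : ‖x₀ - v‖ ≤ ‖x₀ - (v + t • (z - v))‖ := (hP k x₀).2 _ hwK
      have h2 : ‖x₀ - (v + t • (z - v))‖^2
          = ‖x₀ - v‖^2 - 2 * t * ⟪x₀ - v, z - v⟫ + t^2 * ‖z - v‖^2 := by
        have h : x₀ - (v + t • (z - v)) = (x₀ - v) - t • (z - v) := by abel
        rw [h, norm_sub_sq_real, real_inner_smul_right, norm_smul, Real.norm_eq_abs,
          abs_of_nonneg ht0.le, mul_pow]
        ring
      have h3 : ‖x₀ - v‖^2 ≤ ‖x₀ - (v + t • (z - v))‖^2 := by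
        nlinarith [norm_nonneg (x₀ - v), norm_nonneg (x₀ - (v + t • (z - v)))]
      have h4 : 2 * t * ⟪x₀ - v, z - v⟫ ≤ t^2 * ‖z - v‖^2 := by linarith
      have h5 : 2 * t * ⟪x₀ - v, z - v⟫ / (2*t) ≤ t^2 * ‖z - v‖^2 / (2*t) :=
        (div_le_div_iff_of_pos_right (by linarith)).2 h4
      have h6 : 2 * t * ⟪x₀ - v, z - v⟫ / (2*t) = ⟪x₀ - v, z - v⟫ := by
        field_simp
      have h7 : t^2 * ‖z - v‖^2 / (2*t) = (t/2) * ‖z - v‖^2 := by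
        field_simp
      rw [h6, h7] at h5
      exact h5
    by_contra hcon
    push_neg at hcon
    set M := ‖z - v‖^2 with hM
    have hM0 : 0 ≤ M := sq_nonneg _
    have ht0 : 0 < min 1 (⟪x₀ - v, z - v⟫/(M+1)) := lt_min one_pos (by positivity)
    have h8 := hkey _ ht0 (min_le_left _ _)
    have h9 : (min 1 (⟪x₀ - v, z - v⟫/(M+1))/2) * M ≤ (⟪x₀ - v, z - v⟫/(M+1))/2 * M := by
      apply mul_le_mul_of_nonneg_right _ hM0
      have := min_le_right 1 (⟪x₀ - v, z - v⟫/(M+1))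
      linarith
    have h10 : (⟪x₀ - v, z - v⟫/(M+1))/2 * M < ⟪x₀ - v, z - v⟫ := by
      rw [div_div, div_mul_eq_mul_div, div_lt_iff₀ (by positivity)]
      nlinarith
    linarith
  -- nonexpansiveness towards points of K k
  have hPnon : ∀ k x₀, ∀ z ∈ K k, ‖P k x₀ - z‖ ≤ ‖x₀ - z‖ := by
    intro k x₀ z hz
    have h1 := hPchar k x₀ z hz
    have h2 : ‖x₀ - z‖^2 = ‖x₀ - P k x₀‖^2 + 2*⟪x₀ - P k x₀, P k x₀ - z⟫ + ‖P k x₀ - z‖^2 := by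
      have h : x₀ - z = (x₀ - P k x₀) + (P k x₀ - z) := by abel
      rw [h, norm_add_sq_real]
    have h3 : ⟪x₀ - P k x₀, P k x₀ - z⟫ = -⟪x₀ - P k x₀, z - P k x₀⟫ := by
      rw [← inner_neg_right]
      congr 1
      abel
    nlinarith [norm_nonneg (P k x₀ - z), norm_nonneg (x₀ - z), sq_nonneg (‖x₀ - P k x₀‖),
      sq_nonneg (‖P k x₀ - z‖ + ‖x₀ - z‖)]
  -- key inequality
  have hkey : ∀ z ∈ C, ∀ k,
      ‖x (k+1) - z‖^2 ≤ ‖x k - z‖^2 - 2*(β k/η k)*⟪F (x k), x k - z⟫ + (β k)^2 := by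
    intro z hz k
    have h1 : ‖x (k+1) - z‖ ≤ ‖y k - z‖ := by
      rw [hxk k]; exact hPnon k (y k) z (hCK k hz)
    have h2 : ‖y k - z‖^2 = ‖x k - z‖^2 - 2*(β k/η k)*⟪F (x k), x k - z⟫
        + (β k/η k)^2*‖F (x k)‖^2 := by
      have h : y k - z = (x k - z) - (β k/η k) • F (x k) := by simp [hydef]; abel
      rw [h, norm_sub_sq_real, real_inner_smul_right, norm_smul, Real.norm_eq_abs,
        abs_of_nonneg (hc0 k), mul_pow, real_inner_comm]
      ring
    have h3 : (β k/η k)^2*‖F (x k)‖^2 ≤ (β k)^2 := by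
      have h := mul_le_mul (hstepF k) (hstepF k) (mul_nonneg (hc0 k) (norm_nonneg _)) (hβpos k).le
      nlinarith [h]
    have h4 : ‖x (k+1) - z‖^2 ≤ ‖y k - z‖^2 := by
      nlinarith [norm_nonneg (x (k+1) - z), norm_nonneg (y k - z)]
    linarith
  -- bound on β
  set S := ∑' k, (β k)^2 with hSdef
  have hS0 : 0 ≤ S := tsum_nonneg fun k => sq_nonneg _
  set B := Real.sqrt S with hBdef
  have hB0 : 0 ≤ B := Real.sqrt_nonneg _
  have hβB : ∀ k, β k ≤ B := by
    intro k
    rw [hBdef, show β k = Real.sqrt ((β k)^2) from (Real.sqrt_sq (hβpos k).le).symm]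
    exact Real.sqrt_le_sqrt (Summable.le_tsum hβsq k fun i _ => sq_nonneg _)
  obtain ⟨R₀, hWR⟩ := hWbdd.subset_closedBall zhat
  set R := max R₀ 0 with hRdef
  have hWR' : W ⊆ closedBall zhat R := hWR.trans (closedBall_subset_closedBall (le_max_left _ _))
  have hR0 : 0 ≤ R := le_max_right _ _
  set M := max (‖x 0 - zhat‖^2) ((R+B)^2) + S with hMdef
  have hbound : ∀ k, ‖x k - zhat‖^2
      ≤ max (‖x 0 - zhat‖^2) ((R+B)^2) + ∑ j ∈ Finset.range k, (β j)^2 := by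
    intro k
    induction k with
    | zero => simp [le_max_left]
    | succ k ih =>
      by_cases hkW : x k ∈ W
      · have h1 : ‖x k - zhat‖ ≤ R := by
          have := hWR' hkW
          rwa [mem_closedBall, dist_eq_norm] at this
        have h2 : ‖x (k+1) - zhat‖ ≤ ‖y k - zhat‖ := by
          rw [hxk k]; exact hPnon k (y k) zhat (hCK k hzC)
        have h3 : ‖y k - zhat‖ ≤ ‖x k - zhat‖ + β k := by
          have h := norm_add_le (x k - zhat) (y k - x k)
          have h' : (x k - zhat) + (y k - x k) = y k - zhat := by abel
          rw [h'] at h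
          linarith [hstep k]
        have h4 : ‖x (k+1) - zhat‖ ≤ R + B := by linarith [hβB k]
        have h5 : ‖x (k+1) - zhat‖^2 ≤ (R+B)^2 := by
          nlinarith [norm_nonneg (x (k+1) - zhat)]
        have h6 : (R+B)^2 ≤ max (‖x 0 - zhat‖^2) ((R+B)^2) := le_max_right _ _
        have h7 : (0:ℝ) ≤ ∑ j ∈ Finset.range (k+1), (β j)^2 :=
          Finset.sum_nonneg fun j _ => sq_nonneg _
        linarith
      · have h1 := hkey zhat hzC k
        have h2 : 0 ≤ ⟪F (x k), x k - zhat⟫ := hW (x k) hkW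
        rw [Finset.sum_range_succ]
        nlinarith [mul_nonneg (hc0 k) h2]
  have hxM : ∀ k, ‖x k - zhat‖^2 ≤ M := by
    intro k
    have h2 : ∑ j ∈ Finset.range k, (β j)^2 ≤ S := Summable.sum_le_tsum _ (fun i _ => sq_nonneg _) hβsq
    have := hbound k
    rw [hMdef]
    linarith
  set ρ := Real.sqrt M with hρdef
  have hρ0 : 0 ≤ ρ := Real.sqrt_nonneg _
  have hxρ : ∀ k, ‖x k - zhat‖ ≤ ρ := by
    intro k
    rw [hρdef, show ‖x k - zhat‖ = Real.sqrt (‖x k - zhat‖^2) from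
      (Real.sqrt_sq (norm_nonneg _)).symm]
    exact Real.sqrt_le_sqrt (hxM k)
  set V := closedBall zhat (ρ + B) with hVdef
  have hxV : ∀ k, x k ∈ V := by
    intro k
    rw [hVdef, mem_closedBall, dist_eq_norm]
    linarith [hxρ k]
  have hyV : ∀ k, y k ∈ V := by
    intro k
    rw [hVdef, mem_closedBall, dist_eq_norm]
    have h := norm_add_le (x k - zhat) (y k - x k)
    have h' : (x k - zhat) + (y k - x k) = y k - zhat := by abel
    rw [h'] at h
    linarith [hstep k, hxρ k, hβB k]
  have hVbdd : Bornology.IsBounded V := isBounded_closedBall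
  -- bound on η
  obtain ⟨Hf, hHf⟩ :=
    (isCompact_closedBall zhat (ρ+B)).exists_bound_of_continuousOn hFcont.continuousOn
  set H := max 1 Hf with hHdef
  have hH1 : (1:ℝ) ≤ H := le_max_left _ _
  have hηH : ∀ k, η k ≤ H := fun k =>
    max_le hH1 ((hHf (x k) (hxV k)).trans (le_max_right _ _))
  -- contraction of distances
  obtain ⟨μ, hμ0, hμ1, hμ⟩ := hcontr V hVbdd
  set d : ℕ → ℝ := fun k => infDist (x k) C with hddef
  have hd0 : ∀ k, 0 ≤ d k := fun k => infDist_nonneg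
  have hdrec : ∀ k, d (k+1) ≤ μ * d k + β k := by
    intro k
    have h1 : infDist (x (k+1)) C ≤ μ * infDist (y k) C := by
      rw [hxk k]; exact hμ k (y k) (hyV k)
    have h2 : infDist (y k) C ≤ infDist (x k) C + dist (y k) (x k) :=
      infDist_le_infDist_add_dist
    have h3 : dist (y k) (x k) ≤ β k := by rw [dist_eq_norm]; exact hstep k
    have h4 : μ * infDist (y k) C ≤ μ * (infDist (x k) C + β k) := by
      apply mul_le_mul_of_nonneg_left _ hμ0
      linarith
    have h5 : μ * (infDist (x k) C + β k) ≤ μ * infDist (x k) C + β k := by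
      nlinarith [hβpos k]
    simp only [hddef]
    linarith
  have hβ0 : Tendsto β atTop (nhds 0) := by
    have h1 : Tendsto (fun k => Real.sqrt ((β k)^2)) atTop (nhds (Real.sqrt 0)) :=
      (Real.continuous_sqrt.tendsto 0).comp hβsq.tendsto_atTop_zero
    have h2 : (fun k => Real.sqrt ((β k)^2)) = β := funext fun k => Real.sqrt_sq (hβpos k).le
    rw [h2, Real.sqrt_zero] at h1
    exact h1
  have hdten : Tendsto d atTop (nhds 0) :=
    tendsto_zero_of_contract hμ0 hμ1 hd0 hdrec hβ0
  -- summable d^2 and β*d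
  obtain ⟨ν, C₂, hν0, hν1, hC₂, hYoung⟩ := young_exists hμ0 hμ1
  have hd2rec : ∀ k, (d (k+1))^2 ≤ ν * (d k)^2 + C₂ * (β k)^2 := by
    intro k
    have h0 : 0 ≤ μ * d k + β k := by
      have := mul_nonneg hμ0 (hd0 k)
      linarith [hβpos k]
    have h1 : (d (k+1))^2 ≤ (μ * d k + β k)^2 := by
      nlinarith [hd0 (k+1), hdrec k]
    exact h1.trans (hYoung (d k) (β k))
  have hd2sum : Summable (fun k => (d k)^2) :=
    summable_of_contract hν0 hν1 (fun k => sq_nonneg _)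
      (fun k => mul_nonneg hC₂ (sq_nonneg _)) hd2rec (hβsq.mul_left C₂)
  have hβdsum : Summable (fun k => β k * d k) := by
    apply Summable.of_nonneg_of_le (fun k => mul_nonneg (hβpos k).le (hd0 k))
      (fun k => ?_) ((hβsq.add hd2sum).mul_left (1/2))
    nlinarith [sq_nonneg (β k - d k)]
  -- lower bound for the inner product
  have hlow : ∀ k, -(‖F xstar‖ * d k) ≤ ⟪F (x k), x k - xstar⟫ := by
    intro k
    obtain ⟨p, hpC, hpd⟩ := hCcl.exists_infDist_eq_dist hCne (x k)
    have h1 : 0 ≤ ⟪F (x k) - F xstar, x k - xstar⟫ := hFmono _ _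
    have h2 : ⟪F xstar, x k - xstar⟫ = ⟪F xstar, x k - p⟫ + ⟪F xstar, p - xstar⟫ := by
      rw [← inner_add_right]
      congr 1
      abel
    have h3 : 0 ≤ ⟪F xstar, p - xstar⟫ := hxsSol p hpC
    have h4 : -(‖F xstar‖ * ‖x k - p‖) ≤ ⟪F xstar, x k - p⟫ :=
      (abs_le.1 (abs_real_inner_le_norm _ _)).1
    have h5 : ‖x k - p‖ = d k := by
      simp only [hddef]
      rw [hpd, dist_eq_norm]
    have h6 : ⟪F (x k), x k - xstar⟫
        = ⟪F (x k) - F xstar, x k - xstar⟫ + ⟪F xstar, x k - xstar⟫ := by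
      rw [inner_sub_left]
      ring
    rw [h5] at h4
    rw [h6, h2]
    linarith
  set a : ℕ → ℝ := fun k => ⟪F (x k), x k - xstar⟫ + ‖F xstar‖ * d k with hadef
  have ha0 : ∀ k, 0 ≤ a k := by
    intro k
    have := hlow k
    simp only [hadef]
    linarith
  set e : ℕ → ℝ := fun k => 2*‖F xstar‖*(β k * d k) + (β k)^2 with hedef
  have he0 : ∀ k, 0 ≤ e k := by
    intro k
    simp only [hedef]
    have h1 := mul_nonneg (hβpos k).le (hd0 k)
    have h2 := norm_nonneg (F xstar)
    nlinarith [sq_nonneg (β k)]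
  have hesum : Summable e := (hβdsum.mul_left (2*‖F xstar‖)).add hβsq
  set q : ℕ → ℝ := fun k => (β k/η k) * a k with hqdef
  have hq0 : ∀ k, 0 ≤ q k := fun k => mul_nonneg (hc0 k) (ha0 k)
  set r : ℕ → ℝ := fun k => ‖x k - xstar‖^2 with hrdef
  have hr0 : ∀ k, 0 ≤ r k := fun k => sq_nonneg _
  have hrrec : ∀ k, r (k+1) ≤ r k - 2 * q k + e k := by
    intro k
    have h1 := hkey xstar hxsC k
    have h3 : ⟪F (x k), x k - xstar⟫ = a k - ‖F xstar‖ * d k := by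
      simp only [hadef]
      ring
    rw [h3] at h1
    have h2 : (β k/η k) * (‖F xstar‖ * d k) ≤ β k * (‖F xstar‖ * d k) := by
      apply mul_le_mul_of_nonneg_right _ (mul_nonneg (norm_nonneg _) (hd0 k))
      exact div_le_self (hβpos k).le (hη1 k)
    simp only [hrdef, hedef, hqdef]
    nlinarith [h1, h2]
  have hrrec' : ∀ k, r (k+1) ≤ r k + e k := by
    intro k
    have h1 := hrrec k
    have h2 := hq0 k
    linarith
  obtain ⟨L, hrL⟩ := quasiFejer hr0 he0 hrrec' hesum
  set E := ∑' k, e k with hEdef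
  have hqsum : Summable q := by
    apply summable_of_sum_range_le (c := (r 0 + E)/2) hq0
    intro N
    have aux : ∀ N, r N + ∑ k ∈ Finset.range N, 2 * q k
        ≤ r 0 + ∑ k ∈ Finset.range N, e k := by
      intro N
      induction N with
      | zero => simp
      | succ N ih =>
        rw [Finset.sum_range_succ, Finset.sum_range_succ]
        have := hrrec N
        linarith
    have h1 := aux N
    have h2 : ∑ k ∈ Finset.range N, e k ≤ E := Summable.sum_le_tsum _ (fun i _ => he0 i) hesum
    have h3 : 0 ≤ r N := hr0 N
    have h4 : ∑ k ∈ Finset.range N, 2 * q k = 2 * ∑ k ∈ Finset.range N, q k :=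
      (Finset.mul_sum _ _ _).symm
    linarith
  -- frequently small a
  have hfreq : ∀ m : ℕ, ∃ᶠ k in atTop, a k < 1/((m:ℝ)+1) := by
    intro m
    by_contra hcon
    rw [Filter.not_frequently] at hcon
    obtain ⟨N₀, hN₀⟩ := eventually_atTop.1 hcon
    push_neg at hN₀
    have hm1 : (0:ℝ) < 1/((m:ℝ)+1) := by positivity
    have hH0 : (0:ℝ) < H := lt_of_lt_of_le one_pos hH1
    have hsb : Summable β := by
      rw [← summable_nat_add_iff N₀]
      apply Summable.of_nonneg_of_le (fun k => (hβpos _).le) (fun k => ?_)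
        (((summable_nat_add_iff N₀).2 hqsum).mul_left (H*((m:ℝ)+1)))
      have ha' : 1/((m:ℝ)+1) ≤ a (k+N₀) := hN₀ _ (Nat.le_add_left _ _)
      have h1 : β (k+N₀)/H ≤ β (k+N₀)/η (k+N₀) := by
        rw [div_le_div_iff₀ hH0 (hη0 _)]
        nlinarith [hβpos (k+N₀), hηH (k+N₀)]
      have h2 : (β (k+N₀)/H) * (1/((m:ℝ)+1)) ≤ q (k+N₀) := by
        simp only [hqdef]
        exact mul_le_mul h1 ha' hm1.le (hc0 _)
      have h3 : H*((m:ℝ)+1) * ((β (k+N₀)/H) * (1/((m:ℝ)+1))) = β (k+N₀) := by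
        field_simp
      calc β (k+N₀) = H*((m:ℝ)+1) * ((β (k+N₀)/H) * (1/((m:ℝ)+1))) := h3.symm
        _ ≤ H*((m:ℝ)+1) * q (k+N₀) := by
            apply mul_le_mul_of_nonneg_left h2
            positivity
    exact not_tendsto_atTop_of_tendsto_nhds hsb.hasSum.tendsto_sum_nat hβdiv
  obtain ⟨φ, hφmono, hφ⟩ := Filter.extraction_forall_of_frequently hfreq
  have haφ : Tendsto (fun m => a (φ m)) atTop (nhds 0) :=
    squeeze_zero (fun m => ha0 _) (fun m => (hφ m).le)
      tendsto_one_div_add_atTop_nhds_zero_nat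
  obtain ⟨xh, -, ψ, hψmono, hψ⟩ := tendsto_subseq_of_bounded hVbdd (fun m => hxV (φ m))
  set θ : ℕ → ℕ := fun m => φ (ψ m) with hθdef
  have hθmono : StrictMono θ := hφmono.comp hψmono
  have hxθ : Tendsto (fun m => x (θ m)) atTop (nhds xh) := hψ
  have haθ : Tendsto (fun m => a (θ m)) atTop (nhds 0) := haφ.comp hψmono.tendsto_atTop
  have hdθ : Tendsto (fun m => d (θ m)) atTop (nhds 0) := hdten.comp hθmono.tendsto_atTop
  have hxhC : xh ∈ C := by
    have h1 : Tendsto (fun m => infDist (x (θ m)) C) atTop (nhds (infDist xh C)) :=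
      ((continuous_infDist_pt C).tendsto xh).comp hxθ
    have h2 : infDist xh C = 0 := tendsto_nhds_unique h1 hdθ
    exact (hCcl.mem_iff_infDist_zero hCne).2 h2
  have hGcont : Continuous (fun zz : EuclideanSpace ℝ (Fin n) => ⟪F zz, zz - xstar⟫) :=
    hFcont.inner (continuous_id.sub continuous_const)
  have hinner0 : ⟪F xh, xh - xstar⟫ = 0 := by
    have h1 : Tendsto (fun m => ⟪F (x (θ m)), x (θ m) - xstar⟫) atTop
        (nhds ⟪F xh, xh - xstar⟫) := (hGcont.tendsto xh).comp hxθ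
    have h2 : Tendsto (fun m => a (θ m) - ‖F xstar‖ * d (θ m)) atTop (nhds 0) := by
      have h := haθ.sub (hdθ.const_mul (‖F xstar‖))
      simpa using h
    have h3 : (fun m => ⟪F (x (θ m)), x (θ m) - xstar⟫)
        = fun m => a (θ m) - ‖F xstar‖ * d (θ m) := by
      funext m
      simp only [hadef]
      ring
    rw [h3] at h1
    exact tendsto_nhds_unique h1 h2
  have hmono2 : ⟪F xh - F xstar, xh - xstar⟫ = 0 := by
    have hle : ⟪F xh - F xstar, xh - xstar⟫ ≤ 0 := by
      rw [inner_sub_left]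
      have h := hxsSol xh hxhC
      linarith [hinner0]
    exact le_antisymm hle (hFmono _ _)
  have hFeq : F xh = F xstar := hFpara xh hxhC xstar hxsC hmono2
  have hFs0 : ⟪F xstar, xh - xstar⟫ = 0 := by
    have h := hmono2
    rw [inner_sub_left] at h
    linarith [hinner0]
  have hxhSOL : xh ∈ SOL F C := by
    refine ⟨hxhC, fun z hz => ?_⟩
    have h1 : ⟪F xh, z - xh⟫ = ⟪F xstar, z - xstar⟫ - ⟪F xstar, xh - xstar⟫ := by
      rw [hFeq, show z - xh = (z - xstar) - (xh - xstar) by abel, inner_sub_right]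
    rw [h1, hFs0, sub_zero]
    exact hxsSol z hz
  have hxhstar : xh = xstar := by
    rw [hSOL] at hxhSOL
    exact hxhSOL
  have hrθL : Tendsto (fun m => r (θ m)) atTop (nhds L) := hrL.comp hθmono.tendsto_atTop
  have hrθ0 : Tendsto (fun m => r (θ m)) atTop (nhds 0) := by
    have h1 : Tendsto (fun m => ‖x (θ m) - xstar‖^2) atTop (nhds (‖xh - xstar‖^2)) :=
      (((continuous_id.sub continuous_const).norm.pow 2).tendsto xh).comp hxθ
    rw [hxhstar] at h1
    simpa using h1
  have hL0 : L = 0 := tendsto_nhds_unique hrθL hrθ0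
  have hr2 : Tendsto r atTop (nhds 0) := hL0 ▸ hrL
  have hnorm : Tendsto (fun k => ‖x k - xstar‖) atTop (nhds 0) := by
    have h1 : Tendsto (fun k => Real.sqrt (r k)) atTop (nhds (Real.sqrt 0)) :=
      (Real.continuous_sqrt.tendsto 0).comp hr2
    have h2 : (fun k => Real.sqrt (r k)) = fun k => ‖x k - xstar‖ := by
      funext k
      simp only [hrdef]
      exact Real.sqrt_sq (norm_nonneg _)
    rw [h2, Real.sqrt_zero] at h1
    exact h1
  exact tendsto_iff_norm_sub_tendsto_zero.2 hnorm
end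

section
/- Let C ⊆ ℝⁿ be a nonempty closed convex set, ẑ ∈ C, and K ⊆ ℝⁿ a closed convex set with C ⊆ K. Let F : ℝⁿ → ℝⁿ, x ∈ ℝⁿ, β > 0, λ > 0, set η = max{1, ‖F(x)‖}, and let x⁺ = P_K(x − (β/η)F(x)). Then: (i) if ‖x − ẑ‖ ≤ λ, then ‖x⁺ − ẑ‖² ≤ λ² + β² + 2βλ; and (ii) if ⟨F(x), x − ẑ⟩ ≥ 0, then ‖x⁺ − ẑ‖² ≤ ‖x − ẑ‖² + β². -/
open scoped RealInnerProductSpace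
open Metric Filter
set_option maxHeartbeats 1000000

theorem stmt_2 {n : ℕ} (hn : 0 < n)
    (C K : Set (EuclideanSpace ℝ (Fin n)))
    (hCne : C.Nonempty) (hCcl : IsClosed C) (hCcv : Convex ℝ C)
    (zhat : EuclideanSpace ℝ (Fin n)) (hzhat : zhat ∈ C)
    (hKcl : IsClosed K) (hKcv : Convex ℝ K) (hCK : C ⊆ K)
    (F : EuclideanSpace ℝ (Fin n) → EuclideanSpace ℝ (Fin n))
    (x : EuclideanSpace ℝ (Fin n)) (β lam : ℝ) (hβ : 0 < β) (hlam : 0 < lam)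
    -- `xplus = P_K (x - (β / η) • F x)` with `η = max 1 ‖F x‖`:
    -- `xplus` is the point of `K` nearest to `x - (β / η) • F x`.
    (xplus : EuclideanSpace ℝ (Fin n))
    (hproj : xplus ∈ K ∧ ∀ y ∈ K,
      ‖x - (β / max 1 ‖F x‖) • F x - xplus‖ ≤ ‖x - (β / max 1 ‖F x‖) • F x - y‖) :
    (‖x - zhat‖ ≤ lam → ‖xplus - zhat‖ ^ 2 ≤ lam ^ 2 + β ^ 2 + 2 * β * lam) ∧
      (0 ≤ ⟪F x, x - zhat⟫ → ‖xplus - zhat‖ ^ 2 ≤ ‖x - zhat‖ ^ 2 + β ^ 2) := by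
  set η : ℝ := max 1 ‖F x‖ with hηdef
  have hη1 : (1 : ℝ) ≤ η := le_max_left _ _
  have hηpos : (0 : ℝ) < η := lt_of_lt_of_le one_pos hη1
  have hFη : ‖F x‖ ≤ η := le_max_right _ _
  set c : ℝ := β / η with hcdef
  have hc : 0 ≤ c := div_nonneg hβ.le hηpos.le
  have hcF : c * ‖F x‖ ≤ β := by
    rw [hcdef, div_mul_eq_mul_div, div_le_iff₀ hηpos]
    exact mul_le_mul_of_nonneg_left hFη hβ.le
  set u : EuclideanSpace ℝ (Fin n) := x - c • F x with hudef
  -- xplus realizes the infimum of distances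
  have hne : Nonempty K := ⟨⟨xplus, hproj.1⟩⟩
  have hbdd : BddBelow (Set.range fun w : K => ‖u - (w : EuclideanSpace ℝ (Fin n))‖) :=
    ⟨0, by rintro y ⟨w, rfl⟩; exact norm_nonneg _⟩
  have h1 : (⨅ w : K, ‖u - (w : EuclideanSpace ℝ (Fin n))‖) ≤ ‖u - xplus‖ :=
    ciInf_le hbdd ⟨xplus, hproj.1⟩
  have h2 : ‖u - xplus‖ ≤ ⨅ w : K, ‖u - (w : EuclideanSpace ℝ (Fin n))‖ :=
    le_ciInf fun w => hproj.2 w w.2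
  have hmin : ‖u - xplus‖ = ⨅ w : K, ‖u - (w : EuclideanSpace ℝ (Fin n))‖ :=
    le_antisymm h2 h1
  have hvar : ∀ w ∈ K, ⟪u - xplus, w - xplus⟫ ≤ 0 :=
    (norm_eq_iInf_iff_real_inner_le_zero hKcv hproj.1).mp hmin
  have hvz : ⟪u - xplus, zhat - xplus⟫ ≤ 0 := hvar zhat (hCK hzhat)
  have key : ‖xplus - zhat‖ ^ 2 ≤ ‖u - zhat‖ ^ 2 := by
    have hsum : (u - xplus) + (xplus - zhat) = u - zhat := by abel
    have hexp := norm_add_sq_real (u - xplus) (xplus - zhat)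
    rw [hsum] at hexp
    have hflip : ⟪u - xplus, xplus - zhat⟫ = -⟪u - xplus, zhat - xplus⟫ := by
      rw [← inner_neg_right]; congr 1; abel
    nlinarith [sq_nonneg ‖u - xplus‖]
  constructor
  · intro hxz
    have htri : ‖u - zhat‖ ≤ ‖x - zhat‖ + c * ‖F x‖ := by
      have : u - zhat = (x - zhat) - c • F x := by rw [hudef]; abel
      rw [this]
      calc ‖(x - zhat) - c • F x‖ ≤ ‖x - zhat‖ + ‖c • F x‖ := norm_sub_le _ _
        _ = ‖x - zhat‖ + c * ‖F x‖ := by rw [norm_smul, Real.norm_of_nonneg hc]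
    have h1 : ‖u - zhat‖ ≤ lam + β := le_trans htri (by linarith)
    nlinarith [norm_nonneg (u - zhat)]
  · intro hip
    have heq : ‖u - zhat‖ ^ 2
        = ‖x - zhat‖ ^ 2 - 2 * (c * ⟪F x, x - zhat⟫) + (c * ‖F x‖) ^ 2 := by
      have h0 : u - zhat = (x - zhat) - c • F x := by rw [hudef]; abel
      rw [h0, norm_sub_sq_real, real_inner_smul_right, norm_smul,
        Real.norm_of_nonneg hc, real_inner_comm, mul_pow]
    nlinarith [mul_nonneg hc hip, mul_nonneg hc (norm_nonneg (F x)),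
      sq_nonneg (c * ‖F x‖)]
end

section
/- Let C ⊆ ℝⁿ be a nonempty closed convex set and let F : ℝⁿ → ℝⁿ be continuous and satisfy the coerciveness condition. Let β : ℕ → ℝ be stepsizes with β_k > 0 for all k, ∑_{k=0}^∞ β_k = ∞ and ∑_{k=0}^∞ β_k² < ∞. Let (K_k)_{k∈ℕ} be nonempty closed convex subsets of ℝⁿ with C ⊆ K_k for every k, such that for every bounded set V ⊆ ℝⁿ there exists μ ∈ [0,1) with dist(P_{K_k}(x), C) ≤ μ·dist(x, C) for every k and every x ∈ V. Given x⁰ ∈ ℝⁿ, define inductively x^{k+1} = P_{K_k}(x^k − (β_k/η_k)F(x^k)), where η_k = max{1, ‖F(x^k)‖}. Then: (i) the sequences {x^k} and {F(x^k)} are bounded; (ii) dist(x^k, C) → 0 as k → ∞; (iii) ‖x^{k+1} − x^k‖ → 0 as k → ∞; and (iv) every cluster point of {x^k} belongs to C. -/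
/-!
Away from the bounded set `W`, coercivity makes `‖x^k - ẑ‖²` grow by at most `β_k²` per step
(the projection onto `K_k ∋ ẑ` is nonexpansive towards `ẑ`); inside `W` it is bounded outright.
Summability of `β_k²` thus bounds the iterates. On a bounded set the projections contract the
distance to `C` by a fixed factor `μ < 1`, while the gradient-type step moves the point by at most
`β_k → 0`, so `d_{k+1} ≤ μ d_k + β_k` forces `dist(x^k, C) → 0`; the other assertions follow.
-/

open scoped RealInnerProductSpace
open Metric Filter Set Topology

section RealSequences

lemma bddAbove_range_of_le_max_add {a b : ℕ → ℝ} {c : ℝ} (hb : ∀ k, 0 ≤ b k)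
    (hbs : Summable b) (h : ∀ k, a (k + 1) ≤ max (a k + b k) c) : BddAbove (range a) := by
  have hpartial : ∀ k, a k ≤ max (a 0) c + ∑ j ∈ Finset.range k, b j := by
    intro k
    induction k with
    | zero => simp
    | succ k ih =>
      have hsum : 0 ≤ ∑ j ∈ Finset.range k, b j := Finset.sum_nonneg fun j _ => hb j
      rw [Finset.sum_range_succ]
      refine (h k).trans (max_le (by linarith) ?_)
      linarith [le_max_right (a 0) c, hb k]
  exact ⟨max (a 0) c + ∑' j, b j, forall_mem_range.2 fun k =>
    (hpartial k).trans (add_le_add_right (hbs.sum_le_tsum _ fun j _ => hb j) _)⟩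

lemma tendsto_zero_of_le_mul_add {d β : ℕ → ℝ} {μ : ℝ} (hμ0 : 0 ≤ μ) (hμ1 : μ < 1)
    (hd : ∀ k, 0 ≤ d k) (hβ : Tendsto β atTop (𝓝 0)) (h : ∀ k, d (k + 1) ≤ μ * d k + β k) :
    Tendsto d atTop (𝓝 0) := by
  refine tendsto_order.2 ⟨fun a ha => .of_forall fun k => ha.trans_le (hd k), fun ε hε => ?_⟩
  obtain ⟨N, hN⟩ := eventually_atTop.1
    (hβ.eventually (gt_mem_nhds (mul_pos (sub_pos.2 hμ1) (half_pos hε))))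
  -- once `β ≤ (1 - μ) ε / 2`, the recursion keeps `d` below a geometric sequence plus `ε / 2`
  have hbound : ∀ m, d (m + N) ≤ μ ^ m * d N + ε / 2 := by
    intro m
    induction m with
    | zero => simp; linarith
    | succ m ih =>
      calc d (m + 1 + N) = d (m + N + 1) := by rw [Nat.add_right_comm]
        _ ≤ μ * d (m + N) + β (m + N) := h _
        _ ≤ μ * (μ ^ m * d N + ε / 2) + (1 - μ) * (ε / 2) := by
          gcongr; exact (hN _ (Nat.le_add_left _ _)).le
        _ = μ ^ (m + 1) * d N + ε / 2 := by ring
  have hlim : Tendsto (fun m => μ ^ m * d N + ε / 2) atTop (𝓝 (ε / 2)) := by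
    simpa using ((tendsto_pow_atTop_nhds_zero_of_lt_one hμ0 hμ1).mul_const (d N)).add_const
      (ε / 2)
  have hshift : ∀ᶠ m in atTop, d (m + N) ∈ Iio ε :=
    (hlim.eventually (gt_mem_nhds (half_lt_self hε))).mono fun m hm => (hbound m).trans_lt hm
  exact tendsto_principal.1 ((tendsto_add_atTop_iff_nat N).1 (tendsto_principal.2 hshift))

lemma tendsto_zero_of_summable_sq {β : ℕ → ℝ} (hβ : Summable fun k => β k ^ 2) :
    Tendsto β atTop (𝓝 0) := by
  refine (tendsto_zero_iff_abs_tendsto_zero β).2 ?_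
  simpa [Function.comp_def, Real.sqrt_sq_eq_abs] using
    (Real.continuous_sqrt.tendsto 0).comp hβ.tendsto_atTop_zero

end RealSequences

section Metric

variable {α : Type*} [MetricSpace α]

lemma infDist_le_mul_infDist_add_dist {C : Set α} {μ : ℝ} {x u p : α} (hμ0 : 0 ≤ μ)
    (hμ1 : μ ≤ 1) (hp : infDist p C ≤ μ * infDist u C) :
    infDist p C ≤ μ * infDist x C + dist u x := by
  have hux : infDist u C ≤ infDist x C + dist u x := infDist_le_infDist_add_dist
  nlinarith [dist_nonneg (x := u) (y := x)]

lemma mem_of_tendsto_infDist {ι : Type*} {l : Filter ι} [l.NeBot] {C : Set α} (hC : IsClosed C)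
    (hne : C.Nonempty) {f : ι → α} {p : α} (hf : Tendsto f l (𝓝 p))
    (hd : Tendsto (fun i => infDist (f i) C) l (𝓝 0)) : p ∈ C :=
  (hC.mem_iff_infDist_zero hne).2
    (tendsto_nhds_unique (((continuous_infDist_pt C).tendsto p).comp hf) hd)

end Metric

section Projection

variable {E : Type*} [NormedAddCommGroup E]

lemma norm_sub_le_infDist_add_two_mul {C K : Set E} {u p x : E} (hC : C.Nonempty) (hCK : C ⊆ K)
    (hp : p ∈ K ∧ ∀ y ∈ K, ‖u - p‖ ≤ ‖u - y‖) : ‖p - x‖ ≤ infDist x C + 2 * ‖u - x‖ := by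
  have hup : ‖u - p‖ ≤ infDist u C :=
    (le_infDist hC).2 fun c hc => (hp.2 c (hCK hc)).trans_eq (dist_eq_norm u c).symm
  have hux : infDist u C ≤ infDist x C + ‖u - x‖ := by
    simpa only [dist_eq_norm] using infDist_le_infDist_add_dist (x := u) (y := x) (s := C)
  calc ‖p - x‖ ≤ ‖u - p‖ + ‖u - x‖ := by
        rw [norm_sub_rev u p]; exact norm_sub_le_norm_sub_add_norm_sub p u x
    _ ≤ infDist x C + 2 * ‖u - x‖ := by linarith

variable [InnerProductSpace ℝ E]

lemma norm_sub_le_of_isNearest {K : Set E} (hK : Convex ℝ K) {u p z : E}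
    (hp : p ∈ K ∧ ∀ y ∈ K, ‖u - p‖ ≤ ‖u - y‖) (hz : z ∈ K) : ‖p - z‖ ≤ ‖u - z‖ := by
  obtain ⟨hpK, hmin⟩ := hp
  have hvar : ⟪u - p, z - p⟫ ≤ 0 := by
    refine (norm_eq_iInf_iff_real_inner_le_zero hK hpK).1 ?_ z hz
    have : Nonempty K := ⟨⟨p, hpK⟩⟩
    have hbdd : BddBelow (range fun w : K => ‖u - w‖) :=
      ⟨0, forall_mem_range.2 fun w => norm_nonneg _⟩
    exact le_antisymm (le_ciInf fun w => hmin w w.2) (ciInf_le hbdd ⟨p, hpK⟩)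
  have hsplit : ‖u - z‖ ^ 2 = ‖u - p‖ ^ 2 - 2 * ⟪u - p, z - p⟫ + ‖p - z‖ ^ 2 := by
    rw [← sub_add_sub_cancel u p z, norm_add_sq_real, ← neg_sub z p, inner_neg_right]
    ring
  exact (pow_le_pow_iff_left₀ (norm_nonneg _) (norm_nonneg _) two_ne_zero).1
    (by nlinarith [sq_nonneg ‖u - p‖])

lemma norm_div_max_one_smul_le {b : ℝ} (hb : 0 ≤ b) (v : E) : ‖(b / max 1 ‖v‖) • v‖ ≤ b := by
  have hη : 0 < max 1 ‖v‖ := lt_max_of_lt_left one_pos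
  rw [norm_smul, Real.norm_of_nonneg (div_nonneg hb hη.le), div_mul_eq_mul_div,
    div_le_iff₀ hη]
  exact mul_le_mul_of_nonneg_left (le_max_right _ _) hb

lemma norm_sub_smul_sub_sq_le {x v z : E} {s : ℝ} (hs : 0 ≤ s) (h : 0 ≤ ⟪v, x - z⟫) :
    ‖x - s • v - z‖ ^ 2 ≤ ‖x - z‖ ^ 2 + ‖s • v‖ ^ 2 := by
  rw [sub_right_comm, norm_sub_sq_real, real_inner_smul_right, real_inner_comm]
  nlinarith [mul_nonneg hs h]

theorem isBounded_range_of_coercive_of_isNearest {K : ℕ → Set E} {P : ℕ → E → E} {F : E → E}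
    {β : ℕ → ℝ} {x : ℕ → E} {z : E} {W : Set E} (hKcv : ∀ k, Convex ℝ (K k))
    (hP : ∀ k u, P k u ∈ K k ∧ ∀ y ∈ K k, ‖u - P k u‖ ≤ ‖u - y‖) (hzK : ∀ k, z ∈ K k)
    (hW : Bornology.IsBounded W) (hcoer : ∀ u ∉ W, 0 ≤ ⟪F u, u - z⟫) (hβ : ∀ k, 0 ≤ β k)
    (hβsq : Summable fun k => β k ^ 2)
    (hx : ∀ k, x (k + 1) = P k (x k - (β k / max 1 ‖F (x k)‖) • F (x k))) :
    Bornology.IsBounded (range x) := by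
  obtain ⟨ρ, hρ⟩ := (isBounded_iff_subset_closedBall z).1 hW
  obtain ⟨B, hB⟩ := (tendsto_zero_of_summable_sq hβsq).bddAbove_range
  have hstep : ∀ k, ‖x (k + 1) - z‖ ^ 2 ≤ max (‖x k - z‖ ^ 2 + β k ^ 2) ((ρ + B) ^ 2) := by
    intro k
    set s := β k / max 1 ‖F (x k)‖
    have hs : ‖s • F (x k)‖ ≤ β k := norm_div_max_one_smul_le (hβ k) _
    have hnear : ‖x (k + 1) - z‖ ≤ ‖x k - s • F (x k) - z‖ :=
      hx k ▸ norm_sub_le_of_isNearest (hKcv k) (hP k _) (hzK k)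
    by_cases hxW : x k ∈ W
    · refine le_max_of_le_right (pow_le_pow_left₀ (norm_nonneg _) ?_ 2)
      calc ‖x (k + 1) - z‖ ≤ ‖x k - s • F (x k) - z‖ := hnear
        _ ≤ ‖x k - z‖ + ‖s • F (x k)‖ := by rw [sub_right_comm]; exact norm_sub_le _ _
        _ ≤ ρ + B := add_le_add (mem_closedBall_iff_norm.1 (hρ hxW))
          (hs.trans (hB (mem_range_self k)))
    · refine le_max_of_le_left ?_
      calc ‖x (k + 1) - z‖ ^ 2 ≤ ‖x k - s • F (x k) - z‖ ^ 2 :=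
            pow_le_pow_left₀ (norm_nonneg _) hnear 2
        _ ≤ ‖x k - z‖ ^ 2 + ‖s • F (x k)‖ ^ 2 :=
            norm_sub_smul_sub_sq_le (div_nonneg (hβ k) (zero_le_one.trans (le_max_left _ _)))
              (hcoer _ hxW)
        _ ≤ ‖x k - z‖ ^ 2 + β k ^ 2 := by gcongr
  obtain ⟨M, hM⟩ := bddAbove_range_of_le_max_add (a := fun k => ‖x k - z‖ ^ 2)
    (fun k => sq_nonneg (β k)) hβsq hstep
  refine (isBounded_iff_subset_closedBall z).2 ⟨√M, range_subset_iff.2 fun k => ?_⟩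
  exact mem_closedBall_iff_norm.2 (Real.le_sqrt_of_sq_le (hM (mem_range_self k)))

end Projection

theorem stmt_3_general {n : ℕ}
    (C : Set (EuclideanSpace ℝ (Fin n)))
    (hCne : C.Nonempty) (hCcl : IsClosed C)
    (F : EuclideanSpace ℝ (Fin n) → EuclideanSpace ℝ (Fin n))
    (hFcont : Continuous F)
    (hcoer : ∃ zhat ∈ C, ∃ W : Set (EuclideanSpace ℝ (Fin n)),
      Bornology.IsBounded W ∧ ∀ x ∉ W, 0 ≤ ⟪F x, x - zhat⟫)
    (β : ℕ → ℝ) (hβpos : ∀ k, 0 < β k)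
    (hβsq : Summable fun k => (β k) ^ 2)
    (K : ℕ → Set (EuclideanSpace ℝ (Fin n)))
    (hKcv : ∀ k, Convex ℝ (K k)) (hCK : ∀ k, C ⊆ K k)
    -- `P k` is the metric projection onto `K k`: `P k x` is the point of `K k` nearest to `x`.
    (P : ℕ → EuclideanSpace ℝ (Fin n) → EuclideanSpace ℝ (Fin n))
    (hP : ∀ k x, P k x ∈ K k ∧ ∀ y ∈ K k, ‖x - P k x‖ ≤ ‖x - y‖)
    (hcontr : ∀ V : Set (EuclideanSpace ℝ (Fin n)), Bornology.IsBounded V →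
      ∃ μ : ℝ, 0 ≤ μ ∧ μ < 1 ∧ ∀ k, ∀ x ∈ V, infDist (P k x) C ≤ μ * infDist x C)
    (x : ℕ → EuclideanSpace ℝ (Fin n))
    (hx : ∀ k, x (k + 1) = P k (x k - (β k / max 1 ‖F (x k)‖) • F (x k))) :
    Bornology.IsBounded (Set.range x) ∧
      Bornology.IsBounded (Set.range fun k => F (x k)) ∧
      Tendsto (fun k => infDist (x k) C) atTop (nhds 0) ∧
      Tendsto (fun k => ‖x (k + 1) - x k‖) atTop (nhds 0) ∧
      ∀ p : EuclideanSpace ℝ (Fin n),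
        (∃ φ : ℕ → ℕ, StrictMono φ ∧ Tendsto (x ∘ φ) atTop (nhds p)) → p ∈ C := by
  obtain ⟨z, hzC, W, hW, hcoer⟩ := hcoer
  have hβ0 := tendsto_zero_of_summable_sq hβsq
  obtain ⟨B, hB⟩ := hβ0.bddAbove_range
  have hbx : Bornology.IsBounded (range x) := isBounded_range_of_coercive_of_isNearest hKcv hP
    (fun k => hCK k hzC) hW hcoer (fun k => (hβpos k).le) hβsq hx
  set y := fun k => x k - (β k / max 1 ‖F (x k)‖) • F (x k)
  have hyx : ∀ k, dist (y k) (x k) ≤ β k := fun k => by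
    simpa [y, dist_eq_norm] using norm_div_max_one_smul_le (hβpos k).le (F (x k))
  have hby : Bornology.IsBounded (range y) := (hbx.cthickening (δ := B)).subset
    (range_subset_iff.2 fun k => mem_cthickening_of_dist_le _ (x k) _ _ (mem_range_self k)
      ((hyx k).trans (hB (mem_range_self k))))
  obtain ⟨μ, hμ0, hμ1, hμ⟩ := hcontr _ hby
  have hd0 : Tendsto (fun k => infDist (x k) C) atTop (𝓝 0) :=
    tendsto_zero_of_le_mul_add hμ0 hμ1 (fun k => infDist_nonneg) hβ0 fun k =>
      (hx k ▸ infDist_le_mul_infDist_add_dist hμ0 hμ1.le (hμ k _ (mem_range_self k))).trans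
        (by gcongr; exact hyx k)
  refine ⟨hbx, ?_, hd0, ?_, ?_⟩
  · exact (hbx.isCompact_closure.image hFcont).isBounded.subset
      (range_subset_iff.2 fun k => mem_image_of_mem F (subset_closure (mem_range_self k)))
  · refine squeeze_zero (fun k => norm_nonneg _) (fun k => ?_)
      (by simpa using hd0.add (hβ0.const_mul 2))
    rw [hx k]
    refine (norm_sub_le_infDist_add_two_mul hCne (hCK k) (hP k (y k))).trans ?_
    rw [← dist_eq_norm]
    gcongr
    exact hyx k
  · rintro p ⟨φ, hφ, hp⟩
    exact mem_of_tendsto_infDist hCcl hCne hp (hd0.comp hφ.tendsto_atTop)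

theorem stmt_3 {n : ℕ} (hn : 0 < n)
    (C : Set (EuclideanSpace ℝ (Fin n)))
    (hCne : C.Nonempty) (hCcl : IsClosed C) (hCcv : Convex ℝ C)
    (F : EuclideanSpace ℝ (Fin n) → EuclideanSpace ℝ (Fin n))
    (hFcont : Continuous F)
    (hcoer : ∃ zhat ∈ C, ∃ W : Set (EuclideanSpace ℝ (Fin n)),
      Bornology.IsBounded W ∧ ∀ x ∉ W, 0 ≤ ⟪F x, x - zhat⟫)
    (β : ℕ → ℝ) (hβpos : ∀ k, 0 < β k)
    (hβdiv : Tendsto (fun N => ∑ k ∈ Finset.range N, β k) atTop atTop)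
    (hβsq : Summable fun k => (β k) ^ 2)
    (K : ℕ → Set (EuclideanSpace ℝ (Fin n)))
    (hKne : ∀ k, (K k).Nonempty) (hKcl : ∀ k, IsClosed (K k))
    (hKcv : ∀ k, Convex ℝ (K k)) (hCK : ∀ k, C ⊆ K k)
    -- `P k` is the metric projection onto `K k`: `P k x` is the point of `K k` nearest to `x`.
    (P : ℕ → EuclideanSpace ℝ (Fin n) → EuclideanSpace ℝ (Fin n))
    (hP : ∀ k x, P k x ∈ K k ∧ ∀ y ∈ K k, ‖x - P k x‖ ≤ ‖x - y‖)
    (hcontr : ∀ V : Set (EuclideanSpace ℝ (Fin n)), Bornology.IsBounded V →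
      ∃ μ : ℝ, 0 ≤ μ ∧ μ < 1 ∧ ∀ k, ∀ x ∈ V, infDist (P k x) C ≤ μ * infDist x C)
    (x : ℕ → EuclideanSpace ℝ (Fin n))
    (hx : ∀ k, x (k + 1) = P k (x k - (β k / max 1 ‖F (x k)‖) • F (x k))) :
    Bornology.IsBounded (Set.range x) ∧
      Bornology.IsBounded (Set.range fun k => F (x k)) ∧
      Tendsto (fun k => infDist (x k) C) atTop (nhds 0) ∧
      Tendsto (fun k => ‖x (k + 1) - x k‖) atTop (nhds 0) ∧
      ∀ p : EuclideanSpace ℝ (Fin n),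
        (∃ φ : ℕ → ℕ, StrictMono φ ∧ Tendsto (x ∘ φ) atTop (nhds p)) → p ∈ C :=
  stmt_3_general C hCne hCcl F hFcont hcoer β hβpos hβsq K hKcv hCK P hP hcontr x hx
end

section
/- Let g_i : ℝⁿ → ℝ (i = 1, …, m) be convex functions with C := ∩_{i=1}^m {x ∈ ℝⁿ : g_i(x) ≤ 0} nonempty. Let F : ℝⁿ → ℝⁿ, x ∈ ℝⁿ, β > 0, η ≥ 1, and for each i let u_i ∈ ℝⁿ be a subgradient of g_i at x. Set K := ∩_{i=1}^m {z ∈ ℝⁿ : g_i(x) + ⟨u_i, z − x⟩ ≤ 0}, which is a nonempty closed convex set containing C. If P_K(x − (β/η)F(x)) = x, then g_i(x) ≤ 0 for every i (so x ∈ C) and x ∈ SOL(F,C). -/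
open scoped RealInnerProductSpace
open Metric Filter

/-!
The linearised set `K` is an intersection of halfspaces, hence convex, and contains `C` by the
subgradient inequality; evaluating its defining inequalities at `z = x ∈ K` gives `g i x ≤ 0`.
The obtuse-angle characterisation of the projection onto `K` then yields
`⟪-(β / η) • F x, y - x⟫ ≤ 0` for every `y ∈ K ⊇ C`.
-/

section

variable {E : Type*} [NormedAddCommGroup E] [InnerProductSpace ℝ E]

theorem convex_setOf_add_inner_sub_le_zero (a : ℝ) (u x : E) :
    Convex ℝ {z : E | a + ⟪u, z - x⟫ ≤ 0} := by
  have hset : {z : E | a + ⟪u, z - x⟫ ≤ 0} = {z | ⟪u, z⟫ ≤ ⟪u, x⟫ - a} := by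
    ext z
    change a + ⟪u, z - x⟫ ≤ 0 ↔ ⟪u, z⟫ ≤ ⟪u, x⟫ - a
    rw [inner_sub_right]
    constructor <;> intro h <;> linarith
  rw [hset]
  exact convex_halfSpace_le (innerₛₗ ℝ u).isLinear _

theorem real_inner_le_zero_of_forall_norm_sub_le {K : Set E} (hK : Convex ℝ K) {p v : E}
    (hv : v ∈ K) (hmin : ∀ w ∈ K, ‖p - v‖ ≤ ‖p - w‖) : ∀ w ∈ K, ⟪p - v, w - v⟫ ≤ 0 := by
  have : Nonempty K := ⟨⟨v, hv⟩⟩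
  refine (norm_eq_iInf_iff_real_inner_le_zero hK hv).1 (le_antisymm ?_ ?_)
  · exact le_ciInf fun w => hmin w w.2
  · exact ciInf_le (f := fun w : K => ‖p - w‖)
      ⟨0, Set.forall_mem_range.2 fun _ => norm_nonneg _⟩ ⟨v, hv⟩

end

theorem stmt_4_general {n m : ℕ}
    (g : Fin m → EuclideanSpace ℝ (Fin n) → ℝ)
    (F : EuclideanSpace ℝ (Fin n) → EuclideanSpace ℝ (Fin n))
    (x : EuclideanSpace ℝ (Fin n)) (β η : ℝ) (hβ : 0 < β) (hη : 1 ≤ η)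
    -- `u i` is a subgradient of `g i` at `x`.
    (u : Fin m → EuclideanSpace ℝ (Fin n))
    (hu : ∀ i, ∀ z, g i x + ⟪u i, z - x⟫ ≤ g i z)
    -- `P_K (x - (β / η) • F x) = x`, where
    -- `K = ⋂ i, {z | g i x + ⟪u i, z - x⟫ ≤ 0}`: `x` is the point of `K` nearest to
    -- `x - (β / η) • F x`.
    (hfix : x ∈ (⋂ i, {z : EuclideanSpace ℝ (Fin n) | g i x + ⟪u i, z - x⟫ ≤ 0}) ∧
      ∀ y ∈ (⋂ i, {z : EuclideanSpace ℝ (Fin n) | g i x + ⟪u i, z - x⟫ ≤ 0}),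
        ‖x - (β / η) • F x - x‖ ≤ ‖x - (β / η) • F x - y‖) :
    (∀ i, g i x ≤ 0) ∧ x ∈ SOL F (⋂ i, {y : EuclideanSpace ℝ (Fin n) | g i y ≤ 0}) := by
  obtain ⟨hxK, hmin⟩ := hfix
  have hgx : ∀ i, g i x ≤ 0 := fun i => by simpa using Set.mem_iInter.1 hxK i
  refine ⟨hgx, Set.mem_iInter.2 hgx, fun y hy => ?_⟩
  have hyK : y ∈ ⋂ i, {z | g i x + ⟪u i, z - x⟫ ≤ 0} :=
    Set.mem_iInter.2 fun i => (hu i y).trans (Set.mem_iInter.1 hy i)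
  have hK := convex_iInter fun i => convex_setOf_add_inner_sub_le_zero (g i x) (u i) x
  have hobtuse := real_inner_le_zero_of_forall_norm_sub_le hK hxK hmin y hyK
  rw [sub_sub_cancel_left, inner_neg_left, real_inner_smul_left, neg_nonpos] at hobtuse
  exact nonneg_of_mul_nonneg_right hobtuse (div_pos hβ (by linarith))

theorem stmt_4 {n m : ℕ} (hn : 0 < n) (hm : 0 < m)
    (g : Fin m → EuclideanSpace ℝ (Fin n) → ℝ)
    (hgconv : ∀ i, ConvexOn ℝ Set.univ (g i))
    (hCne : (⋂ i, {y : EuclideanSpace ℝ (Fin n) | g i y ≤ 0}).Nonempty)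
    (F : EuclideanSpace ℝ (Fin n) → EuclideanSpace ℝ (Fin n))
    (x : EuclideanSpace ℝ (Fin n)) (β η : ℝ) (hβ : 0 < β) (hη : 1 ≤ η)
    -- `u i` is a subgradient of `g i` at `x`.
    (u : Fin m → EuclideanSpace ℝ (Fin n))
    (hu : ∀ i, ∀ z, g i x + ⟪u i, z - x⟫ ≤ g i z)
    -- `P_K (x - (β / η) • F x) = x`, where
    -- `K = ⋂ i, {z | g i x + ⟪u i, z - x⟫ ≤ 0}`: `x` is the point of `K` nearest to
    -- `x - (β / η) • F x`.
    (hfix : x ∈ (⋂ i, {z : EuclideanSpace ℝ (Fin n) | g i x + ⟪u i, z - x⟫ ≤ 0}) ∧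
      ∀ y ∈ (⋂ i, {z : EuclideanSpace ℝ (Fin n) | g i x + ⟪u i, z - x⟫ ≤ 0}),
        ‖x - (β / η) • F x - x‖ ≤ ‖x - (β / η) • F x - y‖) :
    (∀ i, g i x ≤ 0) ∧ x ∈ SOL F (⋂ i, {y : EuclideanSpace ℝ (Fin n) | g i y ≤ 0}) :=
  stmt_4_general g F x β η hβ hη u hu hfix
end

section
/- Let g_i : ℝⁿ → ℝ (i = 1, …, m) be convex functions, let g(x) := max_{1 ≤ i ≤ m} g_i(x), and let C := {x ∈ ℝⁿ : g(x) ≤ 0}. Assume there exists w ∈ ℝⁿ with g(w) < 0. Then for every y ∈ ℝⁿ with g(y) > 0, one has dist(y, C) ≤ (g(y)/(g(y) − g(w)))·‖y − w‖. -/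
open scoped RealInnerProductSpace
open Metric Filter

/-!
The maximum `g` of finitely many convex functions is convex. On the segment from `y` to the
Slater point `w`, convexity bounds `g` by the affine interpolation of `g y > 0` and `g w < 0`,
which vanishes at the point `z = (1 - t) • y + t • w` with `t = g y / (g y - g w)`. Hence
`z ∈ C`, and `dist y z = t * ‖y - w‖`.
-/

theorem ConvexOn.of_isGreatest_range {ι E : Type*} [AddCommMonoid E] [Module ℝ E]
    {f : ι → E → ℝ} (hf : ∀ i, ConvexOn ℝ Set.univ (f i)) {g : E → ℝ}
    (hg : ∀ x, IsGreatest (Set.range fun i => f i x) (g x)) :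
    ConvexOn ℝ Set.univ g := by
  refine ⟨convex_univ, fun x _ y _ a b ha hb hab => ?_⟩
  obtain ⟨i, hi⟩ := (hg (a • x + b • y)).1
  calc g (a • x + b • y) = f i (a • x + b • y) := hi.symm
    _ ≤ a * f i x + b * f i y := (hf i).2 trivial trivial ha hb hab
    _ ≤ a * g x + b * g y := by
      gcongr
      · exact (hg x).2 ⟨i, rfl⟩
      · exact (hg y).2 ⟨i, rfl⟩

theorem ConvexOn.apply_secantRoot_nonpos {E : Type*} [AddCommMonoid E] [Module ℝ E]
    {f : E → ℝ} (hf : ConvexOn ℝ Set.univ f) {w y : E} (hw : f w < 0) (hy : 0 ≤ f y) :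
    f ((1 - f y / (f y - f w)) • y + (f y / (f y - f w)) • w) ≤ 0 := by
  have hden : 0 < f y - f w := by linarith
  set t := f y / (f y - f w) with ht
  have ht0 : 0 ≤ t := div_nonneg hy hden.le
  have ht1 : t ≤ 1 := (div_le_one hden).2 (by linarith)
  calc f ((1 - t) • y + t • w) ≤ (1 - t) * f y + t * f w :=
        hf.2 trivial trivial (by linarith) ht0 (by ring)
    _ = f y - t * (f y - f w) := by ring
    _ = 0 := by rw [ht, div_mul_cancel₀ _ hden.ne', sub_self]

theorem ConvexOn.infDist_sublevel_le {E : Type*} [SeminormedAddCommGroup E] [NormedSpace ℝ E]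
    {f : E → ℝ} (hf : ConvexOn ℝ Set.univ f) {w y : E} (hw : f w < 0) (hy : 0 ≤ f y) :
    infDist y {x | f x ≤ 0} ≤ f y / (f y - f w) * ‖y - w‖ := by
  have ht0 : 0 ≤ f y / (f y - f w) := div_nonneg hy (by linarith)
  calc infDist y {x | f x ≤ 0}
      ≤ dist y ((1 - f y / (f y - f w)) • y + (f y / (f y - f w)) • w) :=
        infDist_le_dist_of_mem (hf.apply_secantRoot_nonpos hw hy)
    _ = ‖(f y / (f y - f w)) • (y - w)‖ := by rw [dist_eq_norm]; congr 1; module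
    _ = f y / (f y - f w) * ‖y - w‖ := by rw [norm_smul, Real.norm_of_nonneg ht0]

theorem stmt_5_general {n m : ℕ}
    (gi : Fin m → EuclideanSpace ℝ (Fin n) → ℝ)
    (hgconv : ∀ i, ConvexOn ℝ Set.univ (gi i))
    -- `g x = max_{1 ≤ i ≤ m} gi i x`
    (g : EuclideanSpace ℝ (Fin n) → ℝ)
    (hg : ∀ x, IsGreatest (Set.range fun i => gi i x) (g x))
    (w : EuclideanSpace ℝ (Fin n)) (hw : g w < 0) :
    ∀ y : EuclideanSpace ℝ (Fin n), 0 < g y →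
      infDist y {x : EuclideanSpace ℝ (Fin n) | g x ≤ 0} ≤
        g y / (g y - g w) * ‖y - w‖ :=
  fun _ hy => (ConvexOn.of_isGreatest_range hgconv hg).infDist_sublevel_le hw hy.le

theorem stmt_5 {n m : ℕ} (hn : 0 < n) (hm : 0 < m)
    (gi : Fin m → EuclideanSpace ℝ (Fin n) → ℝ)
    (hgconv : ∀ i, ConvexOn ℝ Set.univ (gi i))
    -- `g x = max_{1 ≤ i ≤ m} gi i x`
    (g : EuclideanSpace ℝ (Fin n) → ℝ)
    (hg : ∀ x, IsGreatest (Set.range fun i => gi i x) (g x))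
    (w : EuclideanSpace ℝ (Fin n)) (hw : g w < 0) :
    ∀ y : EuclideanSpace ℝ (Fin n), 0 < g y →
      infDist y {x : EuclideanSpace ℝ (Fin n) | g x ≤ 0} ≤
        g y / (g y - g w) * ‖y - w‖ :=
  stmt_5_general gi hgconv g hg w hw
end

section
/- Let g : ℝⁿ → ℝ be a convex function, let {z^k} be a sequence in ℝⁿ converging to z* ∈ ℝⁿ, and for each k let u^k ∈ ℝⁿ be a subgradient of g at z^k. Define S_k := {y ∈ ℝⁿ : g(z^k) + ⟨u^k, y − z^k⟩ ≤ 0} and assume S_k is nonempty for every k. If dist(z^k, S_k) → 0 as k → ∞, then g(z*) ≤ 0. -/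
open scoped RealInnerProductSpace
open Metric Filter

/-!
For `y` in the halfspace `S_k`, `g (z k) ≤ ⟪u k, z k - y⟫ ≤ ‖u k‖ * dist (z k) y`, so
`g (z k) ≤ ‖u k‖ * dist (z k, S_k)`. A convex function on `ℝⁿ` is continuous, hence bounded above
near `z*`, and testing the subgradient inequality in the direction of `u k` bounds `‖u k‖` for
large `k`. Thus the right-hand side tends to `0` while the left-hand side tends to `g z*`.
-/

lemma le_mul_infDist_of_forall_le_mul_dist {α : Type*} [PseudoMetricSpace α] {x : α}
    {s : Set α} {a c : ℝ} (hc : 0 ≤ c) (hs : s.Nonempty) (h : ∀ y ∈ s, a ≤ c * dist x y) :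
    a ≤ c * infDist x s := by
  rw [infDist_eq_iInf, Real.mul_iInf_of_nonneg hc]
  have := hs.to_subtype
  exact le_ciInf fun y => h y y.2

section InnerProductSpace

variable {E : Type*} [NormedAddCommGroup E] [InnerProductSpace ℝ E]

lemma le_norm_mul_infDist_halfspace {a : ℝ} {u x : E}
    (hS : {y | a + ⟪u, y - x⟫ ≤ 0}.Nonempty) :
    a ≤ ‖u‖ * infDist x {y | a + ⟪u, y - x⟫ ≤ 0} :=
  le_mul_infDist_of_forall_le_mul_dist (norm_nonneg u) hS fun y (hy : a + ⟪u, y - x⟫ ≤ 0) => by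
    have hcs : ⟪u, x - y⟫ ≤ ‖u‖ * dist x y := dist_eq_norm x y ▸ real_inner_le_norm _ _
    have hneg : ⟪u, y - x⟫ = -⟪u, x - y⟫ := by rw [← inner_neg_right, neg_sub]
    linarith

lemma mul_norm_le_sub_of_subgradient {g : E → ℝ} {x u : E} {r M : ℝ} (hr : 0 ≤ r)
    (hu : ∀ y, g x + ⟪u, y - x⟫ ≤ g y) (hM : ∀ y ∈ closedBall x r, g y ≤ M) :
    r * ‖u‖ ≤ M - g x := by
  rcases eq_or_ne u 0 with rfl | hu0
  · simpa using hM x (mem_closedBall_self hr)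
  have hnu : ‖u‖ ≠ 0 := norm_ne_zero_iff.mpr hu0
  set y := x + (r / ‖u‖) • u
  have hinner : ⟪u, y - x⟫ = r * ‖u‖ := by
    simp only [y, add_sub_cancel_left, real_inner_smul_right, real_inner_self_eq_norm_sq]
    field_simp
  have hy : y ∈ closedBall x r := by
    rw [mem_closedBall, dist_eq_norm, add_sub_cancel_left, norm_smul, Real.norm_of_nonneg
      (div_nonneg hr (norm_nonneg u)), div_mul_cancel₀ r hnu]
  linarith [hu y, hM y hy]

end InnerProductSpace

theorem stmt_9_general {n : ℕ}
    (g : EuclideanSpace ℝ (Fin n) → ℝ) (hgconv : ConvexOn ℝ Set.univ g)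
    (z : ℕ → EuclideanSpace ℝ (Fin n)) (zstar : EuclideanSpace ℝ (Fin n))
    (hz : Tendsto z atTop (nhds zstar))
    -- `u k` is a subgradient of `g` at `z k`.
    (u : ℕ → EuclideanSpace ℝ (Fin n))
    (hu : ∀ k, ∀ y, g (z k) + ⟪u k, y - z k⟫ ≤ g y)
    (hSne : ∀ k, ({y : EuclideanSpace ℝ (Fin n) | g (z k) + ⟪u k, y - z k⟫ ≤ 0}).Nonempty)
    (hdist : Tendsto
      (fun k => infDist (z k) {y : EuclideanSpace ℝ (Fin n) | g (z k) + ⟪u k, y - z k⟫ ≤ 0})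
      atTop (nhds 0)) :
    g zstar ≤ 0 := by
  have hgcont : Continuous g := continuousOn_univ.mp (hgconv.continuousOn isOpen_univ)
  obtain ⟨M, hM⟩ := (isCompact_closedBall zstar 2).bddAbove_image hgcont.continuousOn
  have hgz : Tendsto (fun k => g (z k)) atTop (nhds (g zstar)) := (hgcont.tendsto zstar).comp hz
  have hbound : ∀ᶠ k in atTop, g (z k) ≤ (M - g (z k)) *
      infDist (z k) {y | g (z k) + ⟪u k, y - z k⟫ ≤ 0} := by
    filter_upwards [hz (ball_mem_nhds zstar one_pos)] with k hk
    have hball : closedBall (z k) 1 ⊆ closedBall zstar 2 :=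
      closedBall_subset_closedBall' (by linarith [mem_ball.mp hk])
    have hnorm := mul_norm_le_sub_of_subgradient zero_le_one (hu k)
      fun y hy => hM (Set.mem_image_of_mem g (hball hy))
    calc g (z k) ≤ ‖u k‖ * infDist (z k) {y | g (z k) + ⟪u k, y - z k⟫ ≤ 0} :=
          le_norm_mul_infDist_halfspace (hSne k)
      _ ≤ _ := mul_le_mul_of_nonneg_right (by linarith) infDist_nonneg
  have hlim : Tendsto (fun k => (M - g (z k)) *
      infDist (z k) {y | g (z k) + ⟪u k, y - z k⟫ ≤ 0}) atTop (nhds 0) := by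
    simpa using (tendsto_const_nhds.sub hgz).mul hdist
  exact le_of_tendsto_of_tendsto hgz hlim hbound

theorem stmt_9 {n : ℕ} (hn : 0 < n)
    (g : EuclideanSpace ℝ (Fin n) → ℝ) (hgconv : ConvexOn ℝ Set.univ g)
    (z : ℕ → EuclideanSpace ℝ (Fin n)) (zstar : EuclideanSpace ℝ (Fin n))
    (hz : Tendsto z atTop (nhds zstar))
    -- `u k` is a subgradient of `g` at `z k`.
    (u : ℕ → EuclideanSpace ℝ (Fin n))
    (hu : ∀ k, ∀ y, g (z k) + ⟪u k, y - z k⟫ ≤ g y)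
    (hSne : ∀ k, ({y : EuclideanSpace ℝ (Fin n) | g (z k) + ⟪u k, y - z k⟫ ≤ 0}).Nonempty)
    (hdist : Tendsto
      (fun k => infDist (z k) {y : EuclideanSpace ℝ (Fin n) | g (z k) + ⟪u k, y - z k⟫ ≤ 0})
      atTop (nhds 0)) :
    g zstar ≤ 0 :=
  stmt_9_general g hgconv z zstar hz u hu hSne hdist
end

section
/- Let C ⊆ ℝⁿ be a nonempty closed convex set, let F : ℝⁿ → ℝⁿ be monotone, and let x* ∈ SOL(F,C). Then for every y ∈ ℝⁿ and every β > 0, setting η = max{1, ‖F(y)‖}, one has ‖(y − (β/η)F(y)) − x*‖² ≤ ‖y − x*‖² + β² + 2β‖F(x*)‖·dist(y, C). -/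
open scoped RealInnerProductSpace
open Metric Filter

theorem stmt_10 {n : ℕ} (hn : 0 < n)
    (C : Set (EuclideanSpace ℝ (Fin n)))
    (hCne : C.Nonempty) (hCcl : IsClosed C) (hCcv : Convex ℝ C)
    (F : EuclideanSpace ℝ (Fin n) → EuclideanSpace ℝ (Fin n))
    (hFmono : ∀ x y, 0 ≤ ⟪F x - F y, x - y⟫)
    (xstar : EuclideanSpace ℝ (Fin n)) (hxstar : xstar ∈ SOL F C)
    (y : EuclideanSpace ℝ (Fin n)) (β : ℝ) (hβ : 0 < β) :
    ‖y - (β / max 1 ‖F y‖) • F y - xstar‖ ^ 2 ≤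
      ‖y - xstar‖ ^ 2 + β ^ 2 + 2 * β * ‖F xstar‖ * infDist y C := by
  set η : ℝ := max 1 ‖F y‖ with hη
  have hη1 : 1 ≤ η := le_max_left _ _
  have hηF : ‖F y‖ ≤ η := le_max_right _ _
  have hηpos : 0 < η := lt_of_lt_of_le one_pos hη1
  set t : ℝ := β / η with ht
  have htpos : 0 < t := div_pos hβ hηpos
  have htβ : t ≤ β := by
    rw [ht, div_le_iff₀ hηpos]
    nlinarith
  -- projection point
  obtain ⟨p, hpC, hpd⟩ := hCcl.exists_infDist_eq_dist hCne y
  have hdist : infDist y C = ‖y - p‖ := by rw [hpd, dist_eq_norm]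
  have hdnn : 0 ≤ infDist y C := infDist_nonneg
  -- key inner product bound
  have h1 : 0 ≤ ⟪F xstar, p - xstar⟫ := hxstar.2 p hpC
  have h2 : -(‖F xstar‖ * ‖y - p‖) ≤ ⟪F xstar, y - p⟫ :=
    neg_le_of_abs_le (abs_real_inner_le_norm _ _)
  have hmono := hFmono y xstar
  have hsplit : ⟪F xstar, y - xstar⟫ = ⟪F xstar, p - xstar⟫ + ⟪F xstar, y - p⟫ := by
    rw [← inner_add_right]
    congr 1
    abel
  have hkey : -(‖F xstar‖ * infDist y C) ≤ ⟪F y, y - xstar⟫ := by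
    have : ⟪F y, y - xstar⟫ = ⟪F y - F xstar, y - xstar⟫ + ⟪F xstar, y - xstar⟫ := by
      rw [inner_sub_left]; ring
    rw [this, hsplit, hdist]
    linarith
  -- expand norm
  have hexp : ‖y - t • F y - xstar‖ ^ 2
      = ‖y - xstar‖ ^ 2 - 2 * t * ⟪F y, y - xstar⟫ + t ^ 2 * ‖F y‖ ^ 2 := by
    have : y - t • F y - xstar = (y - xstar) - t • F y := by abel
    rw [this, norm_sub_sq_real, real_inner_smul_right, norm_smul,
      real_inner_comm, Real.norm_eq_abs, abs_of_pos htpos]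
    ring
  rw [hexp]
  have hb1 : t ^ 2 * ‖F y‖ ^ 2 ≤ β ^ 2 := by
    have : t * ‖F y‖ ≤ β := by
      rw [ht, div_mul_eq_mul_div, div_le_iff₀ hηpos]
      nlinarith [norm_nonneg (F y)]
    nlinarith [mul_nonneg htpos.le (norm_nonneg (F y)), this, hβ]
  have hb2 : -(2 * t * ⟪F y, y - xstar⟫) ≤ 2 * β * ‖F xstar‖ * infDist y C := by
    have h3 : t * (‖F xstar‖ * infDist y C) ≤ β * (‖F xstar‖ * infDist y C) :=
      mul_le_mul_of_nonneg_right htβ (mul_nonneg (norm_nonneg _) hdnn)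
    nlinarith
  linarith
end

section
/- Let C ⊆ ℝⁿ be a nonempty closed convex set, θ > 0, and let β : ℕ → ℝ and η : ℕ → ℝ satisfy β_j > 0 and η_j ≥ 1 for all j. Set σ_k := ∑_{j=0}^k β_j/η_j. Let {ỹ^j} be a sequence in ℝⁿ with dist(ỹ^j, C) ≤ θβ_j for all j, and define x^{k+1} := (1/σ_k) ∑_{j=0}^k (β_j/η_j) ỹ^j. Then dist(x^{k+1}, C) ≤ (θ/σ_k) ∑_{j=0}^k β_j² for every k. Moreover, if ∑_{j=0}^∞ β_j² < ∞ and σ_k → ∞, then dist(x^k, C) → 0 as k → ∞. -/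
open scoped RealInnerProductSpace
open Metric Filter

theorem stmt_12 {n : ℕ} (hn : 0 < n)
    (C : Set (EuclideanSpace ℝ (Fin n)))
    (hCne : C.Nonempty) (hCcl : IsClosed C) (hCcv : Convex ℝ C)
    (θ : ℝ) (hθ : 0 < θ)
    (β η : ℕ → ℝ) (hβpos : ∀ j, 0 < β j) (hη : ∀ j, 1 ≤ η j)
    (σ : ℕ → ℝ) (hσ : ∀ k, σ k = ∑ j ∈ Finset.range (k + 1), β j / η j)
    (ytil : ℕ → EuclideanSpace ℝ (Fin n))
    (hfeas : ∀ j, infDist (ytil j) C ≤ θ * β j)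
    (x : ℕ → EuclideanSpace ℝ (Fin n))
    (hx : ∀ k, x (k + 1) = (σ k)⁻¹ • ∑ j ∈ Finset.range (k + 1), (β j / η j) • ytil j) :
    (∀ k, infDist (x (k + 1)) C ≤ (θ / σ k) * ∑ j ∈ Finset.range (k + 1), (β j) ^ 2) ∧
      ((Summable fun j => (β j) ^ 2) → Tendsto σ atTop atTop →
        Tendsto (fun k => infDist (x k) C) atTop (nhds 0)) := by
  have hηpos : ∀ j, 0 < η j := fun j => lt_of_lt_of_le one_pos (hη j)
  have hσpos : ∀ k, 0 < σ k := by
    intro k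
    rw [hσ k]
    exact Finset.sum_pos (fun j _ => div_pos (hβpos j) (hηpos j)) ⟨0, by simp⟩
  choose p hpC hpd using fun j => hCcl.exists_infDist_eq_dist hCne (ytil j)
  have main : ∀ k, infDist (x (k + 1)) C ≤
      (θ / σ k) * ∑ j ∈ Finset.range (k + 1), (β j) ^ 2 := by
    intro k
    set w : ℕ → ℝ := fun j => (σ k)⁻¹ * (β j / η j) with hw
    have hw0 : ∀ j, 0 ≤ w j := fun j =>
      mul_nonneg (inv_nonneg.2 (hσpos k).le) (div_pos (hβpos j) (hηpos j)).le
    have hwsum : ∑ j ∈ Finset.range (k + 1), w j = 1 := by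
      rw [← Finset.mul_sum, ← hσ k, inv_mul_cancel₀ (hσpos k).ne']
    have hq : (∑ j ∈ Finset.range (k + 1), w j • p j) ∈ C :=
      hCcv.sum_mem (fun j _ => hw0 j) hwsum (fun j _ => hpC j)
    have hxw : x (k + 1) = ∑ j ∈ Finset.range (k + 1), w j • ytil j := by
      rw [hx k, Finset.smul_sum]
      exact Finset.sum_congr rfl fun j _ => smul_smul _ _ _
    calc infDist (x (k + 1)) C ≤ dist (x (k + 1)) (∑ j ∈ Finset.range (k + 1), w j • p j) :=
          infDist_le_dist_of_mem hq
      _ = ‖∑ j ∈ Finset.range (k + 1), w j • (ytil j - p j)‖ := by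
          rw [dist_eq_norm, hxw, ← Finset.sum_sub_distrib]
          congr 1
          exact Finset.sum_congr rfl fun j _ => (smul_sub _ _ _).symm
      _ ≤ ∑ j ∈ Finset.range (k + 1), ‖w j • (ytil j - p j)‖ := norm_sum_le _ _
      _ ≤ ∑ j ∈ Finset.range (k + 1), (θ / σ k) * (β j) ^ 2 := by
          apply Finset.sum_le_sum
          intro j _
          have hd : ‖ytil j - p j‖ ≤ θ * β j := by
            rw [← dist_eq_norm, ← hpd j]; exact hfeas j
          rw [norm_smul, Real.norm_eq_abs, abs_of_nonneg (hw0 j)]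
          have h1 : w j * ‖ytil j - p j‖ ≤ w j * (θ * β j) :=
            mul_le_mul_of_nonneg_left hd (hw0 j)
          refine h1.trans ?_
          have hb : β j / η j ≤ β j :=
            div_le_self (hβpos j).le (hη j)
          have : w j ≤ (σ k)⁻¹ * β j :=
            mul_le_mul_of_nonneg_left hb (inv_nonneg.2 (hσpos k).le)
          calc w j * (θ * β j) ≤ ((σ k)⁻¹ * β j) * (θ * β j) :=
                mul_le_mul_of_nonneg_right this (mul_nonneg hθ.le (hβpos j).le)
            _ = (θ / σ k) * (β j) ^ 2 := by ring
      _ = (θ / σ k) * ∑ j ∈ Finset.range (k + 1), (β j) ^ 2 := by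
          rw [← Finset.mul_sum]
  refine ⟨main, ?_⟩
  intro hsum htend
  set S : ℝ := ∑' j, (β j) ^ 2 with hS
  have hSnn : 0 ≤ S := tsum_nonneg (fun j => sq_nonneg _)
  have hub : ∀ᶠ k in atTop, infDist (x k) C ≤ θ * S * (σ (k - 1))⁻¹ := by
    filter_upwards [eventually_ge_atTop 1] with k hk
    obtain ⟨m, rfl⟩ : ∃ m, k = m + 1 := ⟨k - 1, (Nat.succ_pred_eq_of_pos hk).symm⟩
    have h1 := main m
    have hpart : ∑ j ∈ Finset.range (m + 1), (β j) ^ 2 ≤ S :=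
      Summable.sum_le_tsum _ (fun j _ => sq_nonneg _) hsum
    have h2 : (θ / σ m) * ∑ j ∈ Finset.range (m + 1), (β j) ^ 2 ≤ (θ / σ m) * S :=
      mul_le_mul_of_nonneg_left hpart (div_nonneg hθ.le (hσpos m).le)
    have : (m + 1 - 1 : ℕ) = m := rfl
    rw [this]
    calc infDist (x (m + 1)) C ≤ (θ / σ m) * S := h1.trans h2
      _ = θ * S * (σ m)⁻¹ := by ring
  have hlim : Tendsto (fun k => θ * S * (σ (k - 1))⁻¹) atTop (nhds 0) := by
    have h1 : Tendsto (fun k : ℕ => σ (k - 1)) atTop atTop :=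
      htend.comp (tendsto_sub_atTop_nat 1)
    have h2 : Tendsto (fun k : ℕ => (σ (k - 1))⁻¹) atTop (nhds 0) :=
      h1.inv_tendsto_atTop
    simpa using (h2.const_mul (θ * S))
  refine squeeze_zero' ?_ hub hlim
  exact Eventually.of_forall fun k => infDist_nonneg
end

section
/- Let C ⊆ ℝⁿ be a nonempty closed convex set, let F : ℝⁿ → ℝⁿ be monotone and continuous, and assume SOL(F,C) is nonempty. Let θ > 0 and let β : ℕ → ℝ satisfy β_k > 0 for all k, ∑_{k=0}^∞ β_k = ∞ and ∑_{k=0}^∞ β_k² < ∞. Let {ỹ^k} and {z^k} be sequences in ℝⁿ such that for every k: dist(ỹ^k, C) ≤ θβ_k, and for every x ∈ C: ‖ỹ^k − x‖ ≤ ‖z^k − x‖ and ‖z^{k+1} − x‖ ≤ ‖(ỹ^k − (β_k/η_k)F(ỹ^k)) − x‖, where η_k = max{1, ‖F(ỹ^k)‖}. Set σ_k := ∑_{j=0}^k β_j/η_j and define the ergodic sequence x^{k+1} := (1/σ_k) ∑_{j=0}^k (β_j/η_j) ỹ^j. Then every cluster point of {x^k} belongs to SOL(F,C). -/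
open scoped RealInnerProductSpace
open Metric Filter

set_option maxHeartbeats 1600000 in
theorem stmt_13 {n : ℕ} (hn : 0 < n)
    (C : Set (EuclideanSpace ℝ (Fin n)))
    (hCne : C.Nonempty) (hCcl : IsClosed C) (hCcv : Convex ℝ C)
    (F : EuclideanSpace ℝ (Fin n) → EuclideanSpace ℝ (Fin n))
    (hFmono : ∀ x y, 0 ≤ ⟪F x - F y, x - y⟫) (hFcont : Continuous F)
    (hSOLne : (SOL F C).Nonempty)
    (θ : ℝ) (hθ : 0 < θ)
    (β : ℕ → ℝ) (hβpos : ∀ k, 0 < β k)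
    (hβdiv : Tendsto (fun N => ∑ k ∈ Finset.range N, β k) atTop atTop)
    (hβsq : Summable fun k => (β k) ^ 2)
    (ytil z : ℕ → EuclideanSpace ℝ (Fin n))
    (hfeas : ∀ k, infDist (ytil k) C ≤ θ * β k)
    (hyz : ∀ k, ∀ x ∈ C, ‖ytil k - x‖ ≤ ‖z k - x‖)
    (hznext : ∀ k, ∀ x ∈ C,
      ‖z (k + 1) - x‖ ≤ ‖ytil k - (β k / max 1 ‖F (ytil k)‖) • F (ytil k) - x‖)
    (σ : ℕ → ℝ)
    (hσ : ∀ k, σ k = ∑ j ∈ Finset.range (k + 1), β j / max 1 ‖F (ytil j)‖)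
    (x : ℕ → EuclideanSpace ℝ (Fin n))
    (hx : ∀ k, x (k + 1) =
      (σ k)⁻¹ • ∑ j ∈ Finset.range (k + 1), (β j / max 1 ‖F (ytil j)‖) • ytil j) :
    ∀ p : EuclideanSpace ℝ (Fin n),
      (∃ φ : ℕ → ℕ, StrictMono φ ∧ Tendsto (x ∘ φ) atTop (nhds p)) → p ∈ SOL F C := by
  obtain ⟨xs, hxsC, hxsSOL⟩ := hSOLne
  set η : ℕ → ℝ := fun k => max 1 ‖F (ytil k)‖ with hηdef
  set s : ℕ → ℝ := fun k => β k / η k with hsdef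
  have hη1 : ∀ k, 1 ≤ η k := fun k => le_max_left _ _
  have hηpos : ∀ k, 0 < η k := fun k => lt_of_lt_of_le one_pos (hη1 k)
  have hηF : ∀ k, ‖F (ytil k)‖ ≤ η k := fun k => le_max_right _ _
  have hspos : ∀ k, 0 < s k := fun k => div_pos (hβpos k) (hηpos k)
  have hsβ : ∀ k, s k ≤ β k := fun k => div_le_self (le_of_lt (hβpos k)) (hη1 k)
  have hsF : ∀ k, s k * ‖F (ytil k)‖ ≤ β k := by
    intro k
    have h1 : s k * ‖F (ytil k)‖ ≤ s k * η k :=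
      mul_le_mul_of_nonneg_left (hηF k) (le_of_lt (hspos k))
    have h2 : s k * η k = β k := div_mul_cancel₀ _ (ne_of_gt (hηpos k))
    linarith
  -- choose nearby points in C
  have hc : ∀ k, ∃ c ∈ C, ‖ytil k - c‖ ≤ θ * β k := by
    intro k
    obtain ⟨c, hcC, hcd⟩ := hCcl.exists_infDist_eq_dist hCne (ytil k)
    exact ⟨c, hcC, by rw [← dist_eq_norm, ← hcd]; exact hfeas k⟩
  choose c hcC hcnear using hc
  -- per-step inequality
  have step : ∀ k, ∀ y ∈ C, ‖z (k+1) - y‖^2 ≤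
      ‖z k - y‖^2 - 2 * (s k * ⟪F (ytil k), ytil k - y⟫) + (β k)^2 := by
    intro k y hy
    have h1 : ‖z (k+1) - y‖ ≤ ‖ytil k - s k • F (ytil k) - y‖ := hznext k y hy
    have h2 : ‖z (k+1) - y‖^2 ≤ ‖ytil k - s k • F (ytil k) - y‖^2 :=
      pow_le_pow_left₀ (norm_nonneg _) h1 2
    have h3 : ytil k - s k • F (ytil k) - y = (ytil k - y) - s k • F (ytil k) := by
      abel
    have h4 : ‖(ytil k - y) - s k • F (ytil k)‖^2 =
        ‖ytil k - y‖^2 - 2 * (s k * ⟪F (ytil k), ytil k - y⟫) + (s k)^2 * ‖F (ytil k)‖^2 := by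
      rw [@norm_sub_sq_real, real_inner_smul_right, norm_smul, Real.norm_eq_abs, mul_pow,
        sq_abs]
      rw [real_inner_comm]
    have h5 : (s k)^2 * ‖F (ytil k)‖^2 ≤ (β k)^2 := by
      have h5a : (s k * ‖F (ytil k)‖)^2 ≤ (β k)^2 :=
        pow_le_pow_left₀ (mul_nonneg (hspos k).le (norm_nonneg _)) (hsF k) 2
      nlinarith [h5a]
    have h6 : ‖ytil k - y‖ ≤ ‖z k - y‖ := hyz k y hy
    have h7 : ‖ytil k - y‖^2 ≤ ‖z k - y‖^2 := pow_le_pow_left₀ (norm_nonneg _) h6 2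
    rw [h3, h4] at h2
    linarith
  -- boundedness of z and ytil around xs
  set B : ℝ := ∑' k, (β k)^2 with hBdef
  have hB0 : 0 ≤ B := tsum_nonneg (fun k => sq_nonneg _)
  have hsumB : ∀ N, ∑ j ∈ Finset.range N, (β j)^2 ≤ B := by
    intro N
    exact Summable.sum_le_tsum _ (fun i _ => sq_nonneg _) hβsq
  set Cst : ℝ := 1 + 2*θ*‖F xs‖ with hCstdef
  have hCst0 : 0 ≤ Cst := by positivity
  have key2 : ∀ k, ‖z (k+1) - xs‖^2 ≤ ‖z k - xs‖^2 + Cst * (β k)^2 := by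
    intro k
    have hstep := step k xs hxsC
    -- lower bound on inner product
    have hmono : ⟪F xs, ytil k - xs⟫ ≤ ⟪F (ytil k), ytil k - xs⟫ := by
      have := hFmono (ytil k) xs
      rw [inner_sub_left] at this
      linarith
    have hsplit : ⟪F xs, ytil k - xs⟫ = ⟪F xs, ytil k - c k⟫ + ⟪F xs, c k - xs⟫ := by
      rw [← inner_add_right]
      congr 1
      abel
    have hsol : 0 ≤ ⟪F xs, c k - xs⟫ := hxsSOL _ (hcC k)
    have hcs : |⟪F xs, ytil k - c k⟫| ≤ ‖F xs‖ * (θ * β k) := by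
      calc |⟪F xs, ytil k - c k⟫| ≤ ‖F xs‖ * ‖ytil k - c k‖ := abs_real_inner_le_norm _ _
        _ ≤ ‖F xs‖ * (θ * β k) :=
          mul_le_mul_of_nonneg_left (hcnear k) (norm_nonneg _)
    have hlow : -(‖F xs‖ * (θ * β k)) ≤ ⟪F (ytil k), ytil k - xs⟫ := by
      have := abs_le.mp hcs
      linarith
    have hsb : s k * (‖F xs‖ * (θ * β k)) ≤ β k * (‖F xs‖ * (θ * β k)) := by
      have : 0 ≤ ‖F xs‖ * (θ * β k) := mul_nonneg (norm_nonneg _) (mul_nonneg hθ.le (hβpos k).le)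
      exact mul_le_mul_of_nonneg_right (hsβ k) this
    nlinarith [hspos k, mul_le_mul_of_nonneg_left hlow (le_of_lt (hspos k))]
  have zbound : ∀ k, ‖z k - xs‖^2 ≤ ‖z 0 - xs‖^2 + Cst * B := by
    intro k
    have : ∀ k, ‖z k - xs‖^2 ≤ ‖z 0 - xs‖^2 + Cst * ∑ j ∈ Finset.range k, (β j)^2 := by
      intro k
      induction k with
      | zero => simp
      | succ m ih =>
        have := key2 m
        rw [Finset.sum_range_succ]
        linarith
    calc ‖z k - xs‖^2 ≤ ‖z 0 - xs‖^2 + Cst * ∑ j ∈ Finset.range k, (β j)^2 := this k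
      _ ≤ ‖z 0 - xs‖^2 + Cst * B := by
          have := hsumB k
          nlinarith
  set R : ℝ := Real.sqrt (‖z 0 - xs‖^2 + Cst * B) with hRdef
  have hyball : ∀ k, ytil k ∈ Metric.closedBall xs R := by
    intro k
    rw [Metric.mem_closedBall, dist_eq_norm]
    have h1 : ‖ytil k - xs‖^2 ≤ ‖z 0 - xs‖^2 + Cst * B := by
      have := pow_le_pow_left₀ (norm_nonneg _) (hyz k xs hxsC) 2
      linarith [zbound k]
    calc ‖ytil k - xs‖ = Real.sqrt (‖ytil k - xs‖^2) := by
          rw [Real.sqrt_sq (norm_nonneg _)]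
      _ ≤ R := Real.sqrt_le_sqrt h1
  -- F bounded on the ball, hence η bounded, hence σ → ∞
  obtain ⟨M, hM⟩ := (isCompact_closedBall xs R).exists_bound_of_continuousOn
    (hFcont.continuousOn)
  set ηb : ℝ := max 1 M with hηbdef
  have hηb1 : (1:ℝ) ≤ ηb := le_max_left _ _
  have hηb0 : (0:ℝ) < ηb := lt_of_lt_of_le one_pos hηb1
  have hηbd : ∀ k, η k ≤ ηb := by
    intro k
    exact max_le_max le_rfl (hM _ (hyball k))
  have hsl : ∀ k, β k / ηb ≤ s k := by
    intro k
    exact div_le_div_of_nonneg_left (le_of_lt (hβpos k)) (hηpos k) (hηbd k)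
  have hσpos : ∀ k, 0 < σ k := by
    intro k
    rw [hσ k]
    exact Finset.sum_pos (fun j _ => hspos j) (by simp)
  have hσlb : ∀ k, (∑ j ∈ Finset.range (k+1), β j) / ηb ≤ σ k := by
    intro k
    rw [hσ k, Finset.sum_div]
    exact Finset.sum_le_sum (fun j _ => hsl j)
  have hσtop : Tendsto σ atTop atTop := by
    apply tendsto_atTop_mono hσlb
    have h1 : Tendsto (fun k : ℕ => ∑ j ∈ Finset.range (k+1), β j) atTop atTop :=
      hβdiv.comp (tendsto_add_atTop_nat 1)
    exact h1.atTop_div_const hηb0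
  -- ergodic inequality
  have hsmul : ∀ K, σ K • x (K+1) = ∑ j ∈ Finset.range (K+1), s j • ytil j := by
    intro K
    rw [hx K, smul_smul, mul_inv_cancel₀ (ne_of_gt (hσpos K)), one_smul]
  have ergodic : ∀ K, ∀ y ∈ C,
      σ K * ⟪F y, x (K+1) - y⟫ ≤ (‖z 0 - y‖^2 + B) / 2 := by
    intro K y hy
    have key3 : 2 * ∑ j ∈ Finset.range (K+1), s j * ⟪F y, ytil j - y⟫ ≤
        ‖z 0 - y‖^2 + B := by
      have perstep : ∀ j, 2 * (s j * ⟪F y, ytil j - y⟫) ≤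
          ‖z j - y‖^2 - ‖z (j+1) - y‖^2 + (β j)^2 := by
        intro j
        have hmono : ⟪F y, ytil j - y⟫ ≤ ⟪F (ytil j), ytil j - y⟫ := by
          have := hFmono (ytil j) y
          rw [inner_sub_left] at this
          linarith
        have := step j y hy
        nlinarith [hspos j, mul_le_mul_of_nonneg_left hmono (le_of_lt (hspos j))]
      have hsum : ∑ j ∈ Finset.range (K+1), 2 * (s j * ⟪F y, ytil j - y⟫) ≤
          ∑ j ∈ Finset.range (K+1), (‖z j - y‖^2 - ‖z (j+1) - y‖^2 + (β j)^2) :=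
        Finset.sum_le_sum (fun j _ => perstep j)
      rw [Finset.sum_add_distrib, Finset.sum_range_sub'] at hsum
      rw [Finset.mul_sum]
      have h2 : ∑ j ∈ Finset.range (K+1), (β j)^2 ≤ B := hsumB _
      refine le_trans hsum ?_
      nlinarith [sq_nonneg ‖z (K+1) - y‖]
    have hlhs : ∑ j ∈ Finset.range (K+1), s j * ⟪F y, ytil j - y⟫ =
        σ K * ⟪F y, x (K+1) - y⟫ := by
      rw [← real_inner_smul_right, smul_sub, hsmul K]
      rw [show (σ K) • y = ∑ j ∈ Finset.range (K+1), s j • y by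
        rw [← Finset.sum_smul, ← hσ K]]
      rw [← Finset.sum_sub_distrib, inner_sum]
      refine Finset.sum_congr rfl (fun j _ => ?_)
      rw [← smul_sub, real_inner_smul_right]
    linarith [key3, hlhs ▸ key3]
  -- distance of ergodic iterates to C
  have hxdist : ∀ K, infDist (x (K+1)) C ≤ θ * B / σ K := by
    intro K
    set q : EuclideanSpace ℝ (Fin n) :=
      ∑ j ∈ Finset.range (K+1), (s j / σ K) • c j with hqdef
    have hqC : q ∈ C := by
      apply hCcv.sum_mem (fun j _ => div_nonneg (le_of_lt (hspos j)) (le_of_lt (hσpos K)))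
      · rw [← Finset.sum_div, ← hσ K, div_self (ne_of_gt (hσpos K))]
      · exact fun j _ => hcC j
    have hdiff : x (K+1) - q = ∑ j ∈ Finset.range (K+1), (s j / σ K) • (ytil j - c j) := by
      have : x (K+1) = ∑ j ∈ Finset.range (K+1), (s j / σ K) • ytil j := by
        rw [hx K, Finset.smul_sum]
        refine Finset.sum_congr rfl (fun j _ => ?_)
        rw [smul_smul]
        congr 1
        simp only [hsdef, hηdef]
        ring
      rw [this, hqdef, ← Finset.sum_sub_distrib]
      refine Finset.sum_congr rfl (fun j _ => ?_)
      rw [smul_sub]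
    have hnorm : ‖x (K+1) - q‖ ≤ θ * B / σ K := by
      rw [hdiff]
      calc ‖∑ j ∈ Finset.range (K+1), (s j / σ K) • (ytil j - c j)‖
          ≤ ∑ j ∈ Finset.range (K+1), ‖(s j / σ K) • (ytil j - c j)‖ :=
            norm_sum_le _ _
        _ ≤ ∑ j ∈ Finset.range (K+1), (θ * (β j)^2) / σ K := by
            apply Finset.sum_le_sum
            intro j _
            rw [norm_smul, Real.norm_eq_abs,
              abs_of_nonneg (div_nonneg (le_of_lt (hspos j)) (le_of_lt (hσpos K)))]
            rw [div_mul_eq_mul_div, div_le_div_iff_of_pos_right (hσpos K)]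
            calc s j * ‖ytil j - c j‖ ≤ β j * (θ * β j) := by
                  apply mul_le_mul (hsβ j) (hcnear j) (norm_nonneg _) (le_of_lt (hβpos j))
              _ = θ * (β j)^2 := by ring
        _ ≤ θ * B / σ K := by
            rw [← Finset.sum_div]
            refine (div_le_div_iff_of_pos_right (hσpos K)).mpr ?_
            rw [← Finset.mul_sum]
            exact mul_le_mul_of_nonneg_left (hsumB _) (le_of_lt hθ)
    calc infDist (x (K+1)) C ≤ dist (x (K+1)) q := infDist_le_dist_of_mem hqC
      _ = ‖x (K+1) - q‖ := dist_eq_norm _ _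
      _ ≤ θ * B / σ K := hnorm
  -- now the cluster point argument
  rintro p ⟨φ, hφ, hφtend⟩
  have hφge : ∀ m, m ≤ φ m := fun m => hφ.le_apply
  have hφ1 : Tendsto (fun m => φ m - 1) atTop atTop := by
    apply tendsto_atTop_atTop.mpr
    intro b
    exact ⟨b + 1, fun m hm => by have := hφge m; omega⟩
  have hσφ : Tendsto (fun m => σ (φ m - 1)) atTop atTop := hσtop.comp hφ1
  -- p ∈ C
  have hpC : p ∈ C := by
    have hev : ∀ᶠ m in atTop, infDist ((x ∘ φ) m) C ≤ θ * B / σ (φ m - 1) := by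
      filter_upwards [eventually_ge_atTop 1] with m hm
      have h1 : 1 ≤ φ m := le_trans hm (hφge m)
      have h2 : φ m = (φ m - 1) + 1 := by omega
      simp only [Function.comp_apply]
      rw [h2]
      exact hxdist (φ m - 1)
    have hlim1 : Tendsto (fun m => infDist ((x ∘ φ) m) C) atTop (nhds (infDist p C)) :=
      ((continuous_infDist_pt C).tendsto p).comp hφtend
    have hlim2 : Tendsto (fun m => θ * B / σ (φ m - 1)) atTop (nhds 0) :=
      tendsto_const_nhds.div_atTop hσφ
    have h0 : infDist p C ≤ 0 := le_of_tendsto_of_tendsto hlim1 hlim2 hev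
    have h1 : infDist p C = 0 := le_antisymm h0 infDist_nonneg
    exact (hCcl.mem_iff_infDist_zero hCne).mpr h1
  -- Minty condition at p
  have hMinty : ∀ y ∈ C, ⟪F y, p - y⟫ ≤ 0 := by
    intro y hy
    have hlim1 : Tendsto (fun m => ⟪F y, (x ∘ φ) m - y⟫) atTop (nhds ⟪F y, p - y⟫) :=
      Tendsto.inner tendsto_const_nhds (hφtend.sub tendsto_const_nhds)
    have hlim2 : Tendsto (fun m => (‖z 0 - y‖^2 + B) / 2 / σ (φ m - 1)) atTop (nhds 0) :=
      tendsto_const_nhds.div_atTop hσφ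
    have hev : ∀ᶠ m in atTop,
        ⟪F y, (x ∘ φ) m - y⟫ ≤ (‖z 0 - y‖^2 + B) / 2 / σ (φ m - 1) := by
      filter_upwards [eventually_ge_atTop 1] with m hm
      have h1 : 1 ≤ φ m := le_trans hm (hφge m)
      have h2 : φ m = (φ m - 1) + 1 := by omega
      simp only [Function.comp_apply]
      rw [le_div_iff₀ (hσpos (φ m - 1)), mul_comm]
      have h3 := ergodic (φ m - 1) y hy
      rwa [← h2] at h3
    exact le_of_tendsto_of_tendsto hlim1 hlim2 hev
  refine ⟨hpC, fun y hy => ?_⟩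
  have hmem : ∀ m : ℕ, p + ((1:ℝ)/(m+1)) • (y - p) ∈ C := by
    intro m
    have ht0 : (0:ℝ) ≤ 1/(m+1) := by positivity
    have ht1 : (1:ℝ)/(m+1) ≤ 1 := by
      rw [div_le_one (by positivity)]
      have : (0:ℝ) ≤ (m:ℝ) := Nat.cast_nonneg m
      linarith
    have hconv := hCcv hpC hy (by linarith : (0:ℝ) ≤ 1 - 1/(m+1)) ht0 (by ring)
    convert hconv using 1
    module
  have hpos : ∀ m : ℕ, 0 ≤ ⟪F (p + ((1:ℝ)/(m+1)) • (y - p)), y - p⟫ := by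
    intro m
    have hm := hMinty _ (hmem m)
    have hdiff : p - (p + ((1:ℝ)/(m+1)) • (y - p)) = -(((1:ℝ)/(m+1)) • (y - p)) := by
      module
    rw [hdiff, inner_neg_right, real_inner_smul_right] at hm
    have ht : (0:ℝ) < 1/(m+1) := by positivity
    nlinarith
  have hseq : Tendsto (fun m : ℕ => p + ((1:ℝ)/(m+1)) • (y - p)) atTop (nhds p) := by
    have h0 : Tendsto (fun m : ℕ => (1:ℝ)/(m+1)) atTop (nhds 0) :=
      tendsto_one_div_add_atTop_nhds_zero_nat
    have h2 : Tendsto (fun m : ℕ => ((1:ℝ)/(m+1)) • (y - p)) atTop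
        (nhds (0:EuclideanSpace ℝ (Fin n))) := by
      have h3 := h0.smul_const (y - p)
      rwa [zero_smul] at h3
    have h4 := h2.const_add p
    rwa [add_zero] at h4
  have hlim : Tendsto (fun m : ℕ => ⟪F (p + ((1:ℝ)/(m+1)) • (y - p)), y - p⟫) atTop
      (nhds ⟪F p, y - p⟫) :=
    Tendsto.inner ((hFcont.tendsto p).comp hseq) tendsto_const_nhds
  exact ge_of_tendsto hlim (Eventually.of_forall hpos)
end

section
/- Let C ⊆ ℝⁿ be a nonempty closed convex set, let F : ℝⁿ → ℝⁿ be monotone and continuous, and assume SOL(F,C) is nonempty. Let θ > 0 and let β : ℕ → ℝ satisfy β_k > 0 for all k, ∑_{k=0}^∞ β_k = ∞ and ∑_{k=0}^∞ β_k² < ∞. Let {ỹ^k} and {z^k} be sequences in ℝⁿ such that for every k: dist(ỹ^k, C) ≤ θβ_k, and for every x ∈ C: ‖ỹ^k − x‖ ≤ ‖z^k − x‖ and ‖z^{k+1} − x‖ ≤ ‖(ỹ^k − (β_k/η_k)F(ỹ^k)) − x‖, where η_k = max{1, ‖F(ỹ^k)‖}. Set σ_k := ∑_{j=0}^k β_j/η_j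 and define the ergodic sequence x^{k+1} := (1/σ_k) ∑_{j=0}^k (β_j/η_j) ỹ^j. Then there exists x̄ ∈ SOL(F,C) such that the sequence {P_{SOL(F,C)}(ỹ^k)} converges to x̄ and the sequence {x^k} converges to x̄. -/
open scoped RealInnerProductSpace
open Metric Filter

/-!
For every solution `q`, one outer step and the nonexpansive inner loop give
`‖ỹ_{k+1} - q‖² ≤ ‖ỹ_k - q‖² - 2 (β_k/η_k) ⟪F ỹ_k, ỹ_k - q⟫ + β_k²`, and monotonicity of `F`
together with `dist(ỹ_k, C) ≤ θ β_k` bounds the middle term by `2θ‖F q‖ β_k²`: the iterates are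
quasi-Fejér with respect to `SOL(F, C)` with square-summable errors. Hence `ỹ` is bounded, `F` is
bounded along `ỹ` and its projections, and `‖ỹ_k - P ỹ_k‖² - ∑_{j<k} (errors)` is a decreasing
Lyapunov function dominating `‖P ỹ_m - P ỹ_k‖²`; so the projections converge to some `x̄ ∈ SOL`.

For the ergodic averages, `dist(x^{k+1}, C)` and the Minty gap `⟪F q, x^{k+1} - q⟫` (`q ∈ C`) are
`O(1/σ_k)` with `σ_k → ∞`, so every cluster point lies in `SOL` by Minty's lemma. Averaging the
projection inequality `⟪ỹ_k - P ỹ_k, a - P ỹ_k⟫ ≤ 0` (with `P ỹ_k → x̄`) then gives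
`‖a - x̄‖² ≤ 0` at each cluster point `a`, so the bounded averages converge to `x̄`.
-/

open Set Finset Bornology Topology Asymptotics

section Normed

variable {E : Type*} [NormedAddCommGroup E]

def IsNearest (S : Set E) (u p : E) : Prop :=
  p ∈ S ∧ ∀ q ∈ S, ‖u - p‖ ≤ ‖u - q‖

def IsQuasiFejer (y : ℕ → E) (T : Set E) (ε : ℕ → ℝ) : Prop :=
  ∀ q ∈ T, ∀ j, ‖y (j + 1) - q‖ ^ 2 ≤ ‖y j - q‖ ^ 2 + ε j

noncomputable def stepSize (F : E → E) (β : ℕ → ℝ) (y : ℕ → E) (k : ℕ) : ℝ :=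
  β k / max 1 ‖F (y k)‖

namespace IsQuasiFejer

variable {y : ℕ → E} {T : Set E} {ε : ℕ → ℝ}

theorem antitone_sub_sum (h : IsQuasiFejer y T ε) {q : E} (hq : q ∈ T) :
    Antitone fun k => ‖y k - q‖ ^ 2 - ∑ j ∈ range k, ε j :=
  antitone_nat_of_succ_le fun k => by rw [sum_range_succ]; linarith [h q hq k]

theorem norm_sub_sq_le (h : IsQuasiFejer y T ε) (hε : Summable ε) (hε0 : ∀ j, 0 ≤ ε j)
    {q : E} (hq : q ∈ T) (k : ℕ) : ‖y k - q‖ ^ 2 ≤ ‖y 0 - q‖ ^ 2 + ∑' j, ε j := by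
  have hmono := h.antitone_sub_sum hq (Nat.zero_le k)
  have hsum := hε.sum_le_tsum (range k) fun j _ => hε0 j
  simp only [range_zero, sum_empty, sub_zero] at hmono
  linarith

theorem isBounded_range (h : IsQuasiFejer y T ε) (hε : Summable ε) (hε0 : ∀ j, 0 ≤ ε j)
    (hT : T.Nonempty) : IsBounded (range y) := by
  obtain ⟨q, hq⟩ := hT
  refine (isBounded_iff_subset_closedBall q).2 ⟨√(‖y 0 - q‖ ^ 2 + ∑' j, ε j), ?_⟩
  rintro _ ⟨k, rfl⟩
  rw [mem_closedBall, dist_eq_norm]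
  exact Real.le_sqrt_of_sq_le (h.norm_sub_sq_le hε hε0 hq k)

end IsQuasiFejer

theorem isBounded_range_of_isNearest {S : Set E} {y p : ℕ → E} (hy : IsBounded (range y))
    (hp : ∀ k, IsNearest S (y k) (p k)) {q : E} (hq : q ∈ S) : IsBounded (range p) := by
  obtain ⟨r, hr⟩ := isBounded_iff_forall_norm_le.1 hy
  refine isBounded_iff_forall_norm_le.2 ⟨2 * r + ‖q‖, ?_⟩
  rintro _ ⟨k, rfl⟩
  have hyk := hr _ ⟨k, rfl⟩
  calc ‖p k‖ ≤ ‖y k‖ + ‖y k - p k‖ := by simpa using norm_sub_le (y k) (y k - p k)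
    _ ≤ ‖y k‖ + ‖y k - q‖ := by gcongr; exact (hp k).2 q hq
    _ ≤ 2 * r + ‖q‖ := by linarith [norm_sub_le (y k) q]

variable {F : E → E} {β : ℕ → ℝ} {y : ℕ → E} {k : ℕ}

theorem stepSize_pos (hβ : 0 < β k) : 0 < stepSize F β y k :=
  div_pos hβ (one_pos.trans_le (le_max_left _ _))

theorem stepSize_nonneg (hβ : 0 ≤ β k) : 0 ≤ stepSize F β y k :=
  div_nonneg hβ (zero_le_one.trans (le_max_left _ _))

theorem stepSize_le (hβ : 0 ≤ β k) : stepSize F β y k ≤ β k :=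
  div_le_self hβ (le_max_left _ _)

theorem stepSize_mul_norm_le (hβ : 0 ≤ β k) : stepSize F β y k * ‖F (y k)‖ ≤ β k := by
  rw [stepSize, div_mul_eq_mul_div, div_le_iff₀ (one_pos.trans_le (le_max_left _ _))]
  exact mul_le_mul_of_nonneg_left (le_max_right _ _) hβ

theorem tendsto_sum_stepSize_atTop (hβ : ∀ k, 0 ≤ β k)
    (hβdiv : Tendsto (fun N => ∑ k ∈ range N, β k) atTop atTop) {M : ℝ}
    (hM : ∀ k, ‖F (y k)‖ ≤ M) : Tendsto (fun N => ∑ k ∈ range N, stepSize F β y k) atTop atTop := by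
  refine tendsto_atTop_mono (fun N => ?_)
    (hβdiv.atTop_div_const (one_pos.trans_le (le_max_left 1 M)))
  rw [sum_div]
  exact sum_le_sum fun k _ =>
    div_le_div_of_nonneg_left (hβ k) (one_pos.trans_le (le_max_left _ _)) (max_le_max le_rfl (hM k))

end Normed

theorem cauchySeq_of_sq_dist_le_sub {X : Type*} [PseudoMetricSpace X] {p : ℕ → X} {g : ℕ → ℝ}
    (hg : BddBelow (range g)) (h : ∀ k m, k ≤ m → dist (p m) (p k) ^ 2 ≤ g k - g m) :
    CauchySeq p := by
  have hanti : Antitone g := fun k m hkm => by nlinarith [h k m hkm, sq_nonneg (dist (p m) (p k))]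
  have hlim := tendsto_atTop_ciInf hanti hg
  rw [Metric.cauchySeq_iff']
  intro r hr
  obtain ⟨N, hN⟩ := (hlim.eventually (gt_mem_nhds (lt_add_of_pos_right _ (pow_pos hr 2)))).exists
  refine ⟨N, fun m hm => lt_of_pow_lt_pow_left₀ 2 hr.le ?_⟩
  linarith [h N m hm, ciInf_le hg m]

theorem MapClusterPt.le_of_le_of_tendsto {X ι : Type*} [TopologicalSpace X] {l : Filter ι}
    {u : ι → X} {a : X} (h : MapClusterPt a l u) {g : X → ℝ} (hg : Continuous g) {b : ι → ℝ}
    {c : ℝ} (hle : ∀ i, g (u i) ≤ b i) (hb : Tendsto b l (𝓝 c)) : g a ≤ c := by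
  refine le_of_forall_gt_imp_ge_of_dense fun c' hc' => ?_
  have hmem : {x | g x ≤ c'} ∈ map u l :=
    (hb.eventually (gt_mem_nhds hc')).mono fun i hi => (hle i).trans hi.le
  simpa [(isClosed_le hg continuous_const).closure_eq] using
    ClusterPt.mem_closure_of_mem h _ hmem

theorem Finset.centerMass_le_centerMass {ι : Type*} {t : Finset ι} {w f g : ι → ℝ}
    (hw : ∀ i ∈ t, 0 ≤ w i) (hfg : ∀ i ∈ t, f i ≤ g i) : t.centerMass w f ≤ t.centerMass w g := by
  simp only [centerMass, smul_eq_mul]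
  gcongr with i hi
  exacts [inv_nonneg.2 (sum_nonneg hw), hw i hi, hfg i hi]

section NormedSpace

variable {ι E : Type*} [NormedAddCommGroup E] [NormedSpace ℝ E]

theorem Filter.Tendsto.centerMass_range {s : ℕ → E} {l : E} (hs : Tendsto s atTop (𝓝 l))
    {w : ℕ → ℝ} (hw : ∀ j, 0 ≤ w j) (hσ : Tendsto (fun k => ∑ j ∈ range k, w j) atTop atTop) :
    Tendsto (fun k => (range k).centerMass w s) atTop (𝓝 l) := by
  have ho : (fun j => w j • (s j - l)) =o[atTop] w := by
    simpa using (isBigO_refl w atTop).smul_isLittleO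
      ((isLittleO_one_iff ℝ).2 (tendsto_sub_nhds_zero_iff.2 hs))
  rw [← tendsto_sub_nhds_zero_iff, ← isLittleO_one_iff ℝ]
  refine ((isBigO_refl (fun k => (∑ j ∈ range k, w j)⁻¹) atTop).smul_isLittleO
    (ho.sum_range hw hσ)).congr' ?_ ?_
  · filter_upwards [hσ.eventually_gt_atTop 0] with k hk
    simp only [centerMass, smul_sub, sum_sub_distrib, ← sum_smul, inv_smul_smul₀ hk.ne']
  · filter_upwards [hσ.eventually_gt_atTop 0] with k hk
    exact inv_mul_cancel₀ hk.ne'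

theorem Finset.centerMass_sub {t : Finset ι} {w : ι → ℝ} (z z' : ι → E) :
    t.centerMass w (z - z') = t.centerMass w z - t.centerMass w z' := by
  simp only [centerMass, Pi.sub_apply, smul_sub, sum_sub_distrib]

theorem infDist_centerMass_le [ProperSpace E] {C : Set E} (hC : Convex ℝ C) (hCcl : IsClosed C)
    (hCne : C.Nonempty) {t : Finset ι} {w : ι → ℝ} (hw0 : ∀ i ∈ t, 0 ≤ w i)
    (hw : 0 < ∑ i ∈ t, w i) (z : ι → E) :
    infDist (t.centerMass w z) C ≤ t.centerMass w fun i => infDist (z i) C := by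
  choose c hcC hc using fun i => hCcl.exists_infDist_eq_dist hCne (z i)
  calc infDist (t.centerMass w z) C ≤ dist (t.centerMass w z) (t.centerMass w c) :=
        infDist_le_dist_of_mem (hC.centerMass_mem hw0 hw fun i _ => hcC i)
    _ = ‖t.centerMass w (z - c)‖ := by rw [dist_eq_norm, centerMass_sub]
    _ ≤ t.centerMass w (norm ∘ (z - c)) :=
        (convexOn_norm convex_univ).map_centerMass_le hw0 hw fun _ _ => mem_univ _
    _ = t.centerMass w fun i => infDist (z i) C := by
        simp only [Function.comp_def, Pi.sub_apply, ← dist_eq_norm, hc]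

end NormedSpace

section InnerProductSpace

variable {ι E : Type*} [NormedAddCommGroup E] [InnerProductSpace ℝ E]

theorem IsNearest.inner_sub_le_zero {S : Set E} (hS : Convex ℝ S) {u p q : E}
    (hp : IsNearest S u p) (hq : q ∈ S) : ⟪u - p, q - p⟫ ≤ 0 := by
  have : Nonempty S := ⟨⟨p, hp.1⟩⟩
  refine (norm_eq_iInf_iff_real_inner_le_zero hS hp.1).1 (le_antisymm ?_ ?_) q hq
  · exact le_ciInf fun q => hp.2 q q.2
  · exact ciInf_le ⟨0, forall_mem_range.2 fun _ => norm_nonneg _⟩ (⟨p, hp.1⟩ : S)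

theorem IsNearest.norm_sub_sq_add_norm_sub_sq_le {S : Set E} (hS : Convex ℝ S) {u p q : E}
    (hp : IsNearest S u p) (hq : q ∈ S) : ‖u - p‖ ^ 2 + ‖p - q‖ ^ 2 ≤ ‖u - q‖ ^ 2 := by
  have h := hp.inner_sub_le_zero hS hq
  have e : u - q = (u - p) + (p - q) := by abel
  rw [e, norm_add_sq_real, ← neg_sub q p, inner_neg_right]
  linarith

theorem IsQuasiFejer.cauchySeq_of_isNearest {y : ℕ → E} {T : Set E} {ε : ℕ → ℝ}
    (h : IsQuasiFejer y T ε) (hε : Summable ε) (hε0 : ∀ j, 0 ≤ ε j)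
    {S : Set E} (hS : Convex ℝ S) {p : ℕ → E} (hp : ∀ k, IsNearest S (y k) (p k))
    (hpT : ∀ k, p k ∈ T) : CauchySeq p := by
  refine cauchySeq_of_sq_dist_le_sub (g := fun k => ‖y k - p k‖ ^ 2 - ∑ j ∈ range k, ε j)
    ⟨-∑' j, ε j, ?_⟩ fun k m hkm => ?_
  · rintro _ ⟨k, rfl⟩
    linarith [hε.sum_le_tsum (range k) fun j _ => hε0 j, sq_nonneg ‖y k - p k‖]
  · have hproj := (hp m).norm_sub_sq_add_norm_sub_sq_le hS (hp k).1
    have hfejer := h.antitone_sub_sum (hpT k) hkm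
    rw [dist_eq_norm]
    linarith

theorem inner_nonneg_of_minty {C : Set E} (hC : Convex ℝ C) {F : E → E} (hF : Continuous F)
    {a : E} (ha : a ∈ C) (h : ∀ y ∈ C, 0 ≤ ⟪F y, y - a⟫) {y : E} (hy : y ∈ C) :
    0 ≤ ⟪F a, y - a⟫ := by
  have hseg : ∀ t ∈ Ioc (0 : ℝ) 1, 0 ≤ ⟪F (a + t • (y - a)), y - a⟫ := by
    rintro t ⟨ht0, ht1⟩
    have := h _ (hC.add_smul_sub_mem ha hy ⟨ht0.le, ht1⟩)
    rw [add_sub_cancel_left, real_inner_smul_right] at this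
    exact nonneg_of_mul_nonneg_right this ht0
  have hlim : Tendsto (fun t : ℝ => ⟪F (a + t • (y - a)), y - a⟫) (𝓝[>] 0) (𝓝 ⟪F a, y - a⟫) := by
    have : Continuous fun t : ℝ => ⟪F (a + t • (y - a)), y - a⟫ := by fun_prop
    simpa using (this.tendsto 0).mono_left nhdsWithin_le_nhds
  exact ge_of_tendsto hlim (mem_of_superset (Ioc_mem_nhdsGT one_pos) hseg)

theorem Finset.inner_centerMass_sub {t : Finset ι} {w : ι → ℝ} (hw : ∑ i ∈ t, w i ≠ 0)
    (z : ι → E) (c v : E) : ⟪t.centerMass w z - c, v⟫ = t.centerMass w fun i => ⟪z i - c, v⟫ := by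
  conv_lhs => rw [← centerMass_const hw c, ← centerMass_sub]
  simp only [centerMass, real_inner_smul_left, sum_inner, smul_eq_mul, Pi.sub_apply,
    Function.const_apply]

theorem tendsto_of_forall_mapClusterPt_inner_le [ProperSpace E] {u : ℕ → E}
    (hu : IsBounded (range u)) {S : Set E} (hS : ∀ a, MapClusterPt a atTop u → a ∈ S) {x : E}
    (hx : ∀ a ∈ S, ∃ b : ℕ → ℝ, Tendsto b atTop (𝓝 0) ∧ ∀ k, ⟪u k - x, a - x⟫ ≤ b k) :
    Tendsto u atTop (𝓝 x) := by
  refine hu.isCompact_closure.tendsto_nhds_of_unique_mapClusterPt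
    (Eventually.of_forall fun k => subset_closure ⟨k, rfl⟩) fun a _ ha => ?_
  obtain ⟨b, hb, hle⟩ := hx a (hS a ha)
  have : ⟪a - x, a - x⟫ ≤ 0 :=
    ha.le_of_le_of_tendsto (g := fun v => ⟪v - x, a - x⟫) (by fun_prop) hle hb
  exact sub_eq_zero.1 (real_inner_self_nonpos.1 this)

theorem tendsto_inner_sub_sub_inner_sub {y p : ℕ → E} (hy : IsBounded (range y)) {x : E}
    (hp : Tendsto p atTop (𝓝 x)) (a : E) :
    Tendsto (fun j => ⟪y j - x, a - x⟫ - ⟪y j - p j, a - p j⟫) atTop (𝓝 0) := by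
  obtain ⟨R, hR⟩ := isBounded_iff_forall_norm_le.1 hy
  have h₁ : Tendsto (fun j => ⟪y j, p j - x⟫) atTop (𝓝 0) :=
    squeeze_zero_norm (fun j => (abs_real_inner_le_norm _ _).trans
      (mul_le_mul_of_nonneg_right (hR _ ⟨j, rfl⟩) (norm_nonneg _)))
      (by simpa using (tendsto_iff_norm_sub_tendsto_zero.1 hp).const_mul R)
  have h₂ : Tendsto (fun j => ⟪p j, a - p j⟫ - ⟪x, a - x⟫) atTop (𝓝 0) :=
    tendsto_sub_nhds_zero_iff.2
      (((show Continuous fun v => ⟪v, a - v⟫ by fun_prop).tendsto x).comp hp)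
  have := h₁.add h₂
  rw [add_zero] at this
  refine this.congr fun j => ?_
  simp only [inner_sub_left, inner_sub_right]
  ring

theorem tendsto_centerMass_of_isNearest [ProperSpace E] {S : Set E} (hS : Convex ℝ S)
    {y p : ℕ → E} (hp : ∀ k, IsNearest S (y k) (p k)) (hy : IsBounded (range y)) {x : E}
    (hpx : Tendsto p atTop (𝓝 x)) {w : ℕ → ℝ} (hw : ∀ j, 0 < w j)
    (hσ : Tendsto (fun k => ∑ j ∈ range k, w j) atTop atTop)
    (hcl : ∀ a, MapClusterPt a atTop (fun k => (range (k + 1)).centerMass w y) → a ∈ S) :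
    Tendsto (fun k => (range (k + 1)).centerMass w y) atTop (𝓝 x) := by
  have hσpos : ∀ k, 0 < ∑ j ∈ range (k + 1), w j := fun k =>
    sum_pos (fun j _ => hw j) nonempty_range_add_one
  have hbdd : IsBounded (range fun k => (range (k + 1)).centerMass w y) := by
    refine (isBounded_convexHull.2 hy).subset ?_
    rintro _ ⟨k, rfl⟩
    exact centerMass_mem_convexHull _ (fun j _ => (hw j).le) (hσpos k) fun j _ => ⟨j, rfl⟩
  refine tendsto_of_forall_mapClusterPt_inner_le hbdd hcl fun a ha => ⟨_,
    ((tendsto_inner_sub_sub_inner_sub hy hpx a).centerMass_range (fun j => (hw j).le) hσ).comp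
      (tendsto_add_atTop_nat 1), fun k => ?_⟩
  rw [inner_centerMass_sub (hσpos k).ne']
  refine centerMass_le_centerMass (fun j _ => (hw j).le) fun j _ => ?_
  linarith [(hp j).inner_sub_le_zero hS ha]

variable {F : E → E} {β : ℕ → ℝ} {y : ℕ → E}

theorem norm_sub_sq_le_of_le_norm_sub_stepSize_smul {k : ℕ} (hβ : 0 ≤ β k) {q : E}
    (hstep : ‖y (k + 1) - q‖ ≤ ‖y k - stepSize F β y k • F (y k) - q‖) :
    ‖y (k + 1) - q‖ ^ 2 ≤ ‖y k - q‖ ^ 2 - 2 * stepSize F β y k * ⟪F (y k), y k - q⟫ + β k ^ 2 := by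
  have h := pow_le_pow_left₀ (norm_nonneg _) hstep 2
  have hw := pow_le_pow_left₀ (by positivity [stepSize_nonneg (F := F) (y := y) hβ])
    (stepSize_mul_norm_le (F := F) (y := y) hβ) 2
  rw [show y k - stepSize F β y k • F (y k) - q = (y k - q) - stepSize F β y k • F (y k) by abel,
    norm_sub_sq_real (y k - q), real_inner_smul_right, norm_smul,
    Real.norm_of_nonneg (stepSize_nonneg hβ), real_inner_comm] at h
  linarith

theorem neg_mul_norm_le_inner_of_infDist_le [ProperSpace E] {C : Set E} (hCcl : IsClosed C)
    (hCne : C.Nonempty) (hFmono : ∀ x y, 0 ≤ ⟪F x - F y, x - y⟫) {q : E}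
    (hq : ∀ c ∈ C, 0 ≤ ⟪F q, c - q⟫) {x : E} {δ : ℝ} (hx : infDist x C ≤ δ) :
    -(δ * ‖F q‖) ≤ ⟪F x, x - q⟫ := by
  obtain ⟨c, hc, hxc⟩ := hCcl.exists_infDist_eq_dist hCne x
  have hmono := hFmono x q
  rw [inner_sub_left] at hmono
  calc -(δ * ‖F q‖) ≤ -(‖F q‖ * ‖x - c‖) := by
        rw [← dist_eq_norm, ← hxc]; nlinarith [norm_nonneg (F q)]
    _ ≤ ⟪F q, x - c⟫ + ⟪F q, c - q⟫ := by
        linarith [neg_le_of_abs_le (abs_real_inner_le_norm (F q) (x - c)), hq c hc]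
    _ = ⟪F q, x - q⟫ := by rw [← inner_add_right, sub_add_sub_cancel]
    _ ≤ ⟪F x, x - q⟫ := by linarith

theorem sum_stepSize_mul_inner_le (hβ : ∀ k, 0 ≤ β k) (hFmono : ∀ x y, 0 ≤ ⟪F x - F y, x - y⟫)
    {C : Set E} (hdesc : ∀ k, ∀ q ∈ C, ‖y (k + 1) - q‖ ≤ ‖y k - stepSize F β y k • F (y k) - q‖)
    {q : E} (hq : q ∈ C) (k : ℕ) :
    ∑ j ∈ range k, stepSize F β y j * ⟪y j - q, F q⟫ ≤
      (‖y 0 - q‖ ^ 2 + ∑ j ∈ range k, β j ^ 2) / 2 := by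
  have hterm : ∀ j, stepSize F β y j * ⟪y j - q, F q⟫ ≤
      (‖y j - q‖ ^ 2 - ‖y (j + 1) - q‖ ^ 2 + β j ^ 2) / 2 := by
    intro j
    have hstep := norm_sub_sq_le_of_le_norm_sub_stepSize_smul (hβ j) (hdesc j q hq)
    have hmono := hFmono (y j) q
    rw [inner_sub_left, ← real_inner_comm (F q)] at hmono
    nlinarith [mul_le_mul_of_nonneg_left (sub_nonneg.1 hmono)
      (stepSize_nonneg (F := F) (y := y) (hβ j))]
  calc ∑ j ∈ range k, stepSize F β y j * ⟪y j - q, F q⟫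
      ≤ ∑ j ∈ range k, (‖y j - q‖ ^ 2 - ‖y (j + 1) - q‖ ^ 2 + β j ^ 2) / 2 :=
        sum_le_sum fun j _ => hterm j
    _ = (‖y 0 - q‖ ^ 2 - ‖y k - q‖ ^ 2 + ∑ j ∈ range k, β j ^ 2) / 2 := by
        rw [← sum_div, sum_add_distrib, sum_range_sub' (fun j => ‖y j - q‖ ^ 2)]
    _ ≤ (‖y 0 - q‖ ^ 2 + ∑ j ∈ range k, β j ^ 2) / 2 := by linarith [sq_nonneg ‖y k - q‖]

theorem inner_centerMass_sub_le (hβ : ∀ k, 0 ≤ β k) (hβsq : Summable fun k => β k ^ 2)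
    (hFmono : ∀ x y, 0 ≤ ⟪F x - F y, x - y⟫) {C : Set E}
    (hdesc : ∀ k, ∀ q ∈ C, ‖y (k + 1) - q‖ ≤ ‖y k - stepSize F β y k • F (y k) - q‖)
    {q : E} (hq : q ∈ C) {k : ℕ} (hk : 0 < ∑ j ∈ range k, stepSize F β y j) :
    ⟪(range k).centerMass (stepSize F β y) y - q, F q⟫ ≤
      (‖y 0 - q‖ ^ 2 + ∑' j, β j ^ 2) / 2 / ∑ j ∈ range k, stepSize F β y j := by
  rw [inner_centerMass_sub hk.ne', centerMass, smul_eq_mul, inv_mul_eq_div]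
  refine div_le_div_of_nonneg_right ?_ hk.le
  refine (sum_stepSize_mul_inner_le hβ hFmono hdesc hq k).trans ?_
  gcongr
  exact hβsq.sum_le_tsum _ fun j _ => sq_nonneg _

theorem infDist_centerMass_le_div [ProperSpace E] {C : Set E} (hC : Convex ℝ C)
    (hCcl : IsClosed C) (hCne : C.Nonempty) (hβ : ∀ k, 0 ≤ β k)
    (hβsq : Summable fun k => β k ^ 2) {θ : ℝ} (hθ : 0 ≤ θ)
    (hfeas : ∀ k, infDist (y k) C ≤ θ * β k) {k : ℕ}
    (hk : 0 < ∑ j ∈ range k, stepSize F β y j) :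
    infDist ((range k).centerMass (stepSize F β y) y) C ≤
      θ * (∑' j, β j ^ 2) / ∑ j ∈ range k, stepSize F β y j := by
  have hw0 : ∀ j ∈ range k, 0 ≤ stepSize F β y j := fun j _ => stepSize_nonneg (hβ j)
  refine (infDist_centerMass_le hC hCcl hCne hw0 hk y).trans <|
    (centerMass_le_centerMass hw0 fun j _ => hfeas j).trans ?_
  simp only [centerMass, smul_eq_mul, inv_mul_eq_div]
  refine div_le_div_of_nonneg_right ?_ hk.le
  calc ∑ j ∈ range k, stepSize F β y j * (θ * β j) ≤ ∑ j ∈ range k, θ * β j ^ 2 :=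
        sum_le_sum fun j _ => by
          nlinarith [mul_le_mul_of_nonneg_right (stepSize_le (F := F) (y := y) (hβ j))
            (mul_nonneg hθ (hβ j))]
    _ ≤ θ * ∑' j, β j ^ 2 := by
        rw [← mul_sum]; gcongr; exact hβsq.sum_le_tsum _ fun j _ => sq_nonneg _

end InnerProductSpace

section VariationalInequality

variable {n : ℕ} {C : Set (EuclideanSpace ℝ (Fin n))}
  {F : EuclideanSpace ℝ (Fin n) → EuclideanSpace ℝ (Fin n)}

theorem mem_SOL_iff_minty (hC : Convex ℝ C) (hFmono : ∀ x y, 0 ≤ ⟪F x - F y, x - y⟫)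
    (hFcont : Continuous F) {a : EuclideanSpace ℝ (Fin n)} :
    a ∈ SOL F C ↔ a ∈ C ∧ ∀ y ∈ C, 0 ≤ ⟪F y, y - a⟫ := by
  refine ⟨fun ha => ⟨ha.1, fun y hy => ?_⟩, fun ha => ⟨ha.1, fun y hy =>
    inner_nonneg_of_minty hC hFcont ha.1 ha.2 hy⟩⟩
  have hmono := hFmono y a
  rw [inner_sub_left] at hmono
  linarith [ha.2 y hy]

theorem SOL_eq_inter_iInter (hC : Convex ℝ C) (hFmono : ∀ x y, 0 ≤ ⟪F x - F y, x - y⟫)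
    (hFcont : Continuous F) : SOL F C = C ∩ ⋂ y ∈ C, {a | 0 ≤ ⟪F y, y - a⟫} := by
  ext a
  simp [mem_SOL_iff_minty hC hFmono hFcont]

theorem convex_SOL (hC : Convex ℝ C) (hFmono : ∀ x y, 0 ≤ ⟪F x - F y, x - y⟫)
    (hFcont : Continuous F) : Convex ℝ (SOL F C) := by
  rw [SOL_eq_inter_iInter hC hFmono hFcont]
  refine hC.inter (convex_iInter₂ fun y _ => ?_)
  intro a₁ ha₁ a₂ ha₂ s t hs ht hst
  have e : y - (s • a₁ + t • a₂) = s • (y - a₁) + t • (y - a₂) := by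
    obtain rfl : t = 1 - s := by linarith
    module
  simp only [mem_ofPred_eq, e, inner_add_right, real_inner_smul_right] at ha₁ ha₂ ⊢
  positivity

theorem isClosed_SOL (hCcl : IsClosed C) (hC : Convex ℝ C)
    (hFmono : ∀ x y, 0 ≤ ⟪F x - F y, x - y⟫) (hFcont : Continuous F) : IsClosed (SOL F C) := by
  rw [SOL_eq_inter_iInter hC hFmono hFcont]
  exact hCcl.inter (isClosed_biInter fun y _ => isClosed_le continuous_const (by fun_prop))

variable {θ : ℝ} {β : ℕ → ℝ} {y : ℕ → EuclideanSpace ℝ (Fin n)}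

theorem isQuasiFejer_SOL (hCcl : IsClosed C) (hCne : C.Nonempty)
    (hFmono : ∀ x y, 0 ≤ ⟪F x - F y, x - y⟫) (hθ : 0 ≤ θ) (hβ : ∀ k, 0 ≤ β k)
    (hfeas : ∀ k, infDist (y k) C ≤ θ * β k)
    (hdesc : ∀ k, ∀ q ∈ C, ‖y (k + 1) - q‖ ≤ ‖y k - stepSize F β y k • F (y k) - q‖) (M : ℝ) :
    IsQuasiFejer y {q ∈ SOL F C | ‖F q‖ ≤ M} fun j => (2 * θ * M + 1) * β j ^ 2 := by
  rintro q ⟨hq, hqM⟩ j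
  have hstep := norm_sub_sq_le_of_le_norm_sub_stepSize_smul (hβ j) (hdesc j q hq.1)
  have hlow := neg_mul_norm_le_inner_of_infDist_le hCcl hCne hFmono hq.2 (hfeas j)
  have hw0 := stepSize_nonneg (F := F) (y := y) (hβ j)
  have hwβ : stepSize F β y j * (θ * β j * ‖F q‖) ≤ β j * (θ * β j * M) := by
    have hβj := hβ j
    gcongr
    exact stepSize_le (hβ j)
  nlinarith [mul_le_mul_of_nonneg_left hlow hw0]

theorem mem_SOL_of_mapClusterPt (hC : Convex ℝ C) (hCcl : IsClosed C) (hCne : C.Nonempty)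
    (hFmono : ∀ x y, 0 ≤ ⟪F x - F y, x - y⟫) (hFcont : Continuous F) (hθ : 0 ≤ θ)
    (hβ : ∀ k, 0 < β k) (hβsq : Summable fun k => β k ^ 2)
    (hfeas : ∀ k, infDist (y k) C ≤ θ * β k)
    (hdesc : ∀ k, ∀ q ∈ C, ‖y (k + 1) - q‖ ≤ ‖y k - stepSize F β y k • F (y k) - q‖)
    (hσ : Tendsto (fun k => ∑ j ∈ range k, stepSize F β y j) atTop atTop)
    {a : EuclideanSpace ℝ (Fin n)}
    (ha : MapClusterPt a atTop fun k => (range (k + 1)).centerMass (stepSize F β y) y) :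
    a ∈ SOL F C := by
  have hβ' : ∀ k, 0 ≤ β k := fun k => (hβ k).le
  have hσpos : ∀ k, 0 < ∑ j ∈ range (k + 1), stepSize F β y j := fun k =>
    sum_pos (fun j _ => stepSize_pos (hβ j)) nonempty_range_add_one
  have hσ' := hσ.comp (tendsto_add_atTop_nat 1)
  have haC : a ∈ C := by
    have := ha.le_of_le_of_tendsto (continuous_infDist_pt C)
      (fun k => infDist_centerMass_le_div hC hCcl hCne hβ' hβsq hθ hfeas (hσpos k))
      (tendsto_const_nhds.div_atTop hσ')
    exact (hCcl.mem_iff_infDist_zero hCne).2 (le_antisymm this infDist_nonneg)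
  refine (mem_SOL_iff_minty hC hFmono hFcont).2 ⟨haC, fun q hq => ?_⟩
  have := ha.le_of_le_of_tendsto (g := fun v => ⟪v - q, F q⟫) (by fun_prop)
    (fun k => inner_centerMass_sub_le hβ' hβsq hFmono hdesc hq (hσpos k))
    (tendsto_const_nhds.div_atTop hσ')
  rw [← neg_sub, inner_neg_left, real_inner_comm] at this
  linarith

end VariationalInequality

theorem stmt_14_general {n : ℕ}
    (C : Set (EuclideanSpace ℝ (Fin n)))
    (hCne : C.Nonempty) (hCcl : IsClosed C) (hCcv : Convex ℝ C)
    (F : EuclideanSpace ℝ (Fin n) → EuclideanSpace ℝ (Fin n))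
    (hFmono : ∀ x y, 0 ≤ ⟪F x - F y, x - y⟫) (hFcont : Continuous F)
    (hSOLne : (SOL F C).Nonempty)
    (θ : ℝ) (hθ : 0 < θ)
    (β : ℕ → ℝ) (hβpos : ∀ k, 0 < β k)
    (hβdiv : Tendsto (fun N => ∑ k ∈ Finset.range N, β k) atTop atTop)
    (hβsq : Summable fun k => (β k) ^ 2)
    (ytil z : ℕ → EuclideanSpace ℝ (Fin n))
    (hfeas : ∀ k, infDist (ytil k) C ≤ θ * β k)
    (hyz : ∀ k, ∀ x ∈ C, ‖ytil k - x‖ ≤ ‖z k - x‖)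
    (hznext : ∀ k, ∀ x ∈ C,
      ‖z (k + 1) - x‖ ≤ ‖ytil k - (β k / max 1 ‖F (ytil k)‖) • F (ytil k) - x‖)
    (σ : ℕ → ℝ)
    (hσ : ∀ k, σ k = ∑ j ∈ Finset.range (k + 1), β j / max 1 ‖F (ytil j)‖)
    (x : ℕ → EuclideanSpace ℝ (Fin n))
    (hx : ∀ k, x (k + 1) =
      (σ k)⁻¹ • ∑ j ∈ Finset.range (k + 1), (β j / max 1 ‖F (ytil j)‖) • ytil j)
    -- `p k = P_{SOL(F,C)} (ytil k)`: `p k` is the point of `SOL F C` nearest to `ytil k`.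
    (p : ℕ → EuclideanSpace ℝ (Fin n))
    (hp : ∀ k, p k ∈ SOL F C ∧ ∀ q ∈ SOL F C, ‖ytil k - p k‖ ≤ ‖ytil k - q‖) :
    ∃ xbar ∈ SOL F C,
      Tendsto p atTop (nhds xbar) ∧ Tendsto x atTop (nhds xbar) := by
  obtain ⟨q₀, hq₀⟩ := hSOLne
  have hβ : ∀ k, 0 ≤ β k := fun k => (hβpos k).le
  have hdesc : ∀ k, ∀ q ∈ C,
      ‖ytil (k + 1) - q‖ ≤ ‖ytil k - stepSize F β ytil k • F (ytil k) - q‖ :=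
    fun k q hq => (hyz (k + 1) q hq).trans (hznext k q hq)
  have hfejer := isQuasiFejer_SOL hCcl hCne hFmono hθ.le hβ hfeas hdesc
  have hSOLcv := convex_SOL hCcv hFmono hFcont
  have hyb : IsBounded (range ytil) :=
    (hfejer ‖F q₀‖).isBounded_range (hβsq.mul_left _) (fun j => by positivity) ⟨q₀, hq₀, le_rfl⟩
  have hpb : IsBounded (range p) := isBounded_range_of_isNearest hyb hp hq₀
  obtain ⟨M, hM⟩ :=
    (hyb.union hpb).isCompact_closure.exists_bound_of_continuousOn hFcont.continuousOn
  have hMy : ∀ k, ‖F (ytil k)‖ ≤ M := fun k => hM _ (subset_closure (.inl ⟨k, rfl⟩))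
  have hM0 : 0 ≤ M := (norm_nonneg _).trans (hMy 0)
  obtain ⟨xbar, hpx⟩ := cauchySeq_tendsto_of_complete <|
    (hfejer M).cauchySeq_of_isNearest (hβsq.mul_left _) (fun j => by positivity) hSOLcv hp
      fun k => ⟨(hp k).1, hM _ (subset_closure (.inr ⟨k, rfl⟩))⟩
  have hσtop := tendsto_sum_stepSize_atTop hβ hβdiv hMy
  refine ⟨xbar, (isClosed_SOL hCcl hCcv hFmono hFcont).mem_of_tendsto hpx
    (.of_forall fun k => (hp k).1), hpx, (tendsto_add_atTop_iff_nat 1).1 ?_⟩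
  have hxc : (fun k => x (k + 1)) = fun k => (range (k + 1)).centerMass (stepSize F β ytil) ytil :=
    funext fun k => by rw [hx, hσ]; rfl
  rw [hxc]
  exact tendsto_centerMass_of_isNearest hSOLcv hp hyb hpx (fun j => stepSize_pos (hβpos j))
    hσtop fun a ha => mem_SOL_of_mapClusterPt hCcv hCcl hCne hFmono hFcont hθ.le hβpos hβsq
      hfeas hdesc hσtop ha

theorem stmt_14 {n : ℕ} (hn : 0 < n)
    (C : Set (EuclideanSpace ℝ (Fin n)))
    (hCne : C.Nonempty) (hCcl : IsClosed C) (hCcv : Convex ℝ C)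
    (F : EuclideanSpace ℝ (Fin n) → EuclideanSpace ℝ (Fin n))
    (hFmono : ∀ x y, 0 ≤ ⟪F x - F y, x - y⟫) (hFcont : Continuous F)
    (hSOLne : (SOL F C).Nonempty)
    (θ : ℝ) (hθ : 0 < θ)
    (β : ℕ → ℝ) (hβpos : ∀ k, 0 < β k)
    (hβdiv : Tendsto (fun N => ∑ k ∈ Finset.range N, β k) atTop atTop)
    (hβsq : Summable fun k => (β k) ^ 2)
    (ytil z : ℕ → EuclideanSpace ℝ (Fin n))
    (hfeas : ∀ k, infDist (ytil k) C ≤ θ * β k)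
    (hyz : ∀ k, ∀ x ∈ C, ‖ytil k - x‖ ≤ ‖z k - x‖)
    (hznext : ∀ k, ∀ x ∈ C,
      ‖z (k + 1) - x‖ ≤ ‖ytil k - (β k / max 1 ‖F (ytil k)‖) • F (ytil k) - x‖)
    (σ : ℕ → ℝ)
    (hσ : ∀ k, σ k = ∑ j ∈ Finset.range (k + 1), β j / max 1 ‖F (ytil j)‖)
    (x : ℕ → EuclideanSpace ℝ (Fin n))
    (hx : ∀ k, x (k + 1) =
      (σ k)⁻¹ • ∑ j ∈ Finset.range (k + 1), (β j / max 1 ‖F (ytil j)‖) • ytil j)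
    -- `p k = P_{SOL(F,C)} (ytil k)`: `p k` is the point of `SOL F C` nearest to `ytil k`.
    (p : ℕ → EuclideanSpace ℝ (Fin n))
    (hp : ∀ k, p k ∈ SOL F C ∧ ∀ q ∈ SOL F C, ‖ytil k - p k‖ ≤ ‖ytil k - q‖) :
    ∃ xbar ∈ SOL F C,
      Tendsto p atTop (nhds xbar) ∧ Tendsto x atTop (nhds xbar) :=
  stmt_14_general C hCne hCcl hCcv F hFmono hFcont hSOLne θ hθ β hβpos hβdiv hβsq ytil z hfeas hyz
    hznext σ hσ x hx p hp
end
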